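/- arXiv:1808.03444 — 4 statements merged into one kernel-verified Lean document; each statement's English description precedes it below -/
import Mathlib

section
/- Let λ > 0, ω ∈ ℝ, and design points 0 = t₁ < t₂ < ... < tₙ = 1 with gaps dᵢ = tᵢ₊₁ − tᵢ. Define Uₖ := (I₂ − exp((A + Aᵀ)dₖ))⁻¹ for k = 1,...,n−1 and Vₖ := Uₖ + exp((A + Aᵀ)d_{k−1}) U_{k−1} for k = 2,...,n−1. Then the inverse of C(n) is the block tridiagonal 2n×2n matrix whose diagonal blocks are U₁, V₂, V₃, ..., V_{n−1}, U_{n−1}, whose (k, k+1) block is −exp(Aᵀdₖ)Uₖ, whose (k+1, k) block is −exp(Adₖ)Uₖ, and all other blocks are zero; i.e., C(n) times this matrix equals the 2n×2n identity. -/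
open Matrix

/-- The drift matrix `A = [[-λ, -ω], [ω, -λ]]` of the complex OU process. -/
noncomputable def Amat (lam ω : ℝ) : Matrix (Fin 2) (Fin 2) ℝ := !![-lam, -ω; ω, -lam]

/-- The `2n × 2n` block covariance matrix `C(n)` of the observations, for the
design `t 0 < t 1 < ⋯ < t m` (so `n = m + 1` design points): the `(i,j)`-th
`2 × 2` block is `exp(A(tᵢ - tⱼ))` for `i ≥ j` and `exp(Aᵀ(tⱼ - tᵢ))` for `i < j`. -/
noncomputable def Cmat (lam ω : ℝ) {m : ℕ} (t : Fin (m + 1) → ℝ) :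
    Matrix (Fin (m + 1) × Fin 2) (Fin (m + 1) × Fin 2) ℝ :=
  fun p q =>
    (if q.1 ≤ p.1 then NormedSpace.exp ((t p.1 - t q.1) • Amat lam ω)
     else NormedSpace.exp ((t q.1 - t p.1) • (Amat lam ω)ᵀ)) p.2 q.2

/-- `Uₖ := (I₂ − exp((A + Aᵀ)·d))⁻¹` as a function of the gap `d`. -/
noncomputable def Umat (lam ω d : ℝ) : Matrix (Fin 2) (Fin 2) ℝ :=
  (1 - NormedSpace.exp (d • (Amat lam ω + (Amat lam ω)ᵀ)))⁻¹

/-- The gap `dₖ = t_{k+1} − t_k` (0-based), extended by `0` outside the design. -/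
noncomputable def gapN {m : ℕ} (t : Fin (m + 1) → ℝ) (k : ℕ) : ℝ :=
  if h : k + 1 ≤ m then t ⟨k + 1, by omega⟩ - t ⟨k, by omega⟩ else 0

/-- The `(i,j)`-th `2 × 2` block of the claimed block tridiagonal inverse of `C(n)`:
diagonal blocks `U₁, V₂, …, V_{n−1}, U_{n−1}` (with
`Vₖ = Uₖ + exp((A+Aᵀ)d_{k−1})·U_{k−1}`), super-diagonal blocks `−exp(Aᵀdₖ)·Uₖ`,
sub-diagonal blocks `−exp(Adₖ)·Uₖ`, and zero blocks elsewhere. -/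
noncomputable def Kblk (lam ω : ℝ) {m : ℕ} (t : Fin (m + 1) → ℝ) (i j : Fin (m + 1)) :
    Matrix (Fin 2) (Fin 2) ℝ :=
  if i = j then
    (if i.val = 0 then Umat lam ω (gapN t 0)
     else if i.val = m then Umat lam ω (gapN t (m - 1))
     else Umat lam ω (gapN t i.val) +
       NormedSpace.exp (gapN t (i.val - 1) • (Amat lam ω + (Amat lam ω)ᵀ)) *
         Umat lam ω (gapN t (i.val - 1)))
  else if j.val = i.val + 1 then
    -(NormedSpace.exp (gapN t i.val • (Amat lam ω)ᵀ) * Umat lam ω (gapN t i.val))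
  else if i.val = j.val + 1 then
    -(NormedSpace.exp (gapN t j.val • Amat lam ω) * Umat lam ω (gapN t j.val))
  else 0

noncomputable def Cblk (lam ω : ℝ) {m : ℕ} (t : Fin (m + 1) → ℝ) (i j : Fin (m + 1)) :
    Matrix (Fin 2) (Fin 2) ℝ :=
  if j ≤ i then NormedSpace.exp ((t i - t j) • Amat lam ω)
  else NormedSpace.exp ((t j - t i) • (Amat lam ω)ᵀ)

/-- scalar exponential shorthand target -/
noncomputable def Emat (lam ω s : ℝ) : Matrix (Fin 2) (Fin 2) ℝ :=
  NormedSpace.exp (s • Amat lam ω)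

lemma Amat_add_transpose (lam ω : ℝ) :
    Amat lam ω + (Amat lam ω)ᵀ = (-(2*lam)) • (1 : Matrix (Fin 2) (Fin 2) ℝ) := by
  ext i j
  fin_cases i <;> fin_cases j <;>
    simp [Amat, Matrix.one_apply, Matrix.transpose_apply, Matrix.vecHead, Matrix.vecTail] <;> ring

lemma smul_one_matrix_exp (c : ℝ) :
    NormedSpace.exp (c • (1 : Matrix (Fin 2) (Fin 2) ℝ)) = Real.exp c • 1 := by
  have h1 : c • (1 : Matrix (Fin 2) (Fin 2) ℝ) = Matrix.diagonal (fun _ => c) := by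
    ext i j
    rcases eq_or_ne i j with h | h <;> simp [Matrix.one_apply, h]
  rw [h1, Matrix.exp_diagonal]
  ext i j
  rcases eq_or_ne i j with h | h <;>
    simp [Matrix.one_apply, h, ← Real.exp_eq_exp_ℝ]

lemma exp_smul_one_mat (lam ω d : ℝ) :
    NormedSpace.exp (d • (Amat lam ω + (Amat lam ω)ᵀ))
      = Real.exp (-(2*lam)*d) • (1 : Matrix (Fin 2) (Fin 2) ℝ) := by
  rw [Amat_add_transpose, smul_smul, smul_one_matrix_exp, mul_comm]

lemma Umat_eq (lam ω d : ℝ) :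
    Umat lam ω d = (1 - Real.exp (-(2*lam)*d))⁻¹ • (1 : Matrix (Fin 2) (Fin 2) ℝ) := by
  rw [Umat, exp_smul_one_mat]
  have h : (1 : Matrix (Fin 2) (Fin 2) ℝ) - Real.exp (-(2*lam)*d) • 1
      = (1 - Real.exp (-(2*lam)*d)) • 1 := by rw [sub_smul, one_smul]
  rw [h]
  rcases eq_or_ne (1 - Real.exp (-(2*lam)*d)) 0 with h0 | h0
  · rw [h0]; simp
  · apply Matrix.inv_eq_right_inv
    rw [smul_mul_smul_comm, one_mul, mul_inv_cancel₀ h0, one_smul]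

lemma Emat_mul (lam ω s r : ℝ) :
    Emat lam ω s * Emat lam ω r = Emat lam ω (s+r) := by
  rw [Emat, Emat, Emat, add_smul,
    Matrix.exp_add_of_commute _ _ (((Commute.refl (Amat lam ω)).smul_left s).smul_right r)]

lemma Emat_zero (lam ω : ℝ) : Emat lam ω 0 = 1 := by
  rw [Emat, zero_smul, NormedSpace.exp_zero]

lemma expT_eq (lam ω r : ℝ) :
    NormedSpace.exp (r • (Amat lam ω)ᵀ)
      = Real.exp (-(2*lam)*r) • Emat lam ω (-r) := by
  have hT : (Amat lam ω)ᵀ = (-(2*lam)) • (1 : Matrix (Fin 2) (Fin 2) ℝ) - Amat lam ω :=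
    eq_sub_of_add_eq' (Amat_add_transpose lam ω)
  have h2 : r • (Amat lam ω)ᵀ
      = (-(2*lam)*r) • (1 : Matrix (Fin 2) (Fin 2) ℝ) + (-r) • Amat lam ω := by
    rw [hT, smul_sub, smul_smul, sub_eq_add_neg, ← neg_smul]
    ring_nf
  rw [h2, Matrix.exp_add_of_commute _ _
      ((Commute.one_left ((-r) • Amat lam ω)).smul_left _),
    smul_one_matrix_exp, smul_mul_assoc, one_mul, Emat]

lemma Cblk_le (lam ω : ℝ) {m : ℕ} (t : Fin (m + 1) → ℝ) {i k : Fin (m+1)} (h : k ≤ i) :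
    Cblk lam ω t i k = Emat lam ω (t i - t k) := if_pos h

lemma Cblk_ge (lam ω : ℝ) {m : ℕ} (t : Fin (m + 1) → ℝ) {i k : Fin (m+1)} (h : i ≤ k) :
    Cblk lam ω t i k = Real.exp (-(2*lam)*(t k - t i)) • Emat lam ω (t i - t k) := by
  rcases eq_or_lt_of_le h with rfl | h'
  · rw [Cblk_le lam ω t le_rfl, sub_self, mul_zero, Real.exp_zero, one_smul]
  · rw [Cblk, if_neg (not_le.mpr h'), expT_eq, neg_sub]

lemma Kblk_super (lam ω : ℝ) {m : ℕ} (t : Fin (m + 1) → ℝ) {k j : Fin (m+1)}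
    (hj : j.val = k.val + 1) :
    Kblk lam ω t k j
      = (-(Real.exp (-(2*lam) * gapN t k.val)
          * (1 - Real.exp (-(2*lam) * gapN t k.val))⁻¹)) • Emat lam ω (-(gapN t k.val)) := by
  rw [Kblk, if_neg (by intro h; rw [h] at hj; omega), if_pos hj, expT_eq, Umat_eq,
    smul_mul_smul_comm, mul_one, ← neg_smul]

lemma Kblk_sub (lam ω : ℝ) {m : ℕ} (t : Fin (m + 1) → ℝ) {k j : Fin (m+1)}
    (hk : k.val = j.val + 1) :
    Kblk lam ω t k j
      = (-(1 - Real.exp (-(2*lam) * gapN t j.val))⁻¹) • Emat lam ω (gapN t j.val) := by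
  rw [Kblk, if_neg (by intro h; rw [h] at hk; omega), if_neg (by omega), if_pos hk, Umat_eq,
    mul_smul_comm, mul_one, ← neg_smul]
  rfl

lemma Kblk_diag0 (lam ω : ℝ) {m : ℕ} (t : Fin (m + 1) → ℝ) {j : Fin (m+1)} (hj : j.val = 0) :
    Kblk lam ω t j j = (1 - Real.exp (-(2*lam) * gapN t 0))⁻¹ • 1 := by
  rw [Kblk, if_pos rfl, if_pos hj, Umat_eq]

lemma Kblk_diagm (lam ω : ℝ) {m : ℕ} (t : Fin (m + 1) → ℝ) {j : Fin (m+1)}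
    (hj : j.val = m) (h0 : j.val ≠ 0) :
    Kblk lam ω t j j = (1 - Real.exp (-(2*lam) * gapN t (m-1)))⁻¹ • 1 := by
  rw [Kblk, if_pos rfl, if_neg h0, if_pos hj, Umat_eq]

lemma Kblk_diagmid (lam ω : ℝ) {m : ℕ} (t : Fin (m + 1) → ℝ) {j : Fin (m+1)}
    (h0 : j.val ≠ 0) (hm : j.val ≠ m) :
    Kblk lam ω t j j
      = ((1 - Real.exp (-(2*lam) * gapN t j.val))⁻¹
          + Real.exp (-(2*lam) * gapN t (j.val - 1))
            * (1 - Real.exp (-(2*lam) * gapN t (j.val - 1)))⁻¹) • 1 := by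
  rw [Kblk, if_pos rfl, if_neg h0, if_neg hm, Umat_eq, Umat_eq, exp_smul_one_mat,
    smul_mul_smul_comm, mul_one, ← add_smul]

lemma Kblk_zero (lam ω : ℝ) {m : ℕ} (t : Fin (m + 1) → ℝ) {k j : Fin (m+1)}
    (h1 : k ≠ j) (h2 : j.val ≠ k.val + 1) (h3 : k.val ≠ j.val + 1) :
    Kblk lam ω t k j = 0 := by
  rw [Kblk, if_neg h1, if_neg h2, if_neg h3]

lemma key_sum (lam ω : ℝ) (hlam : 0 < lam) (m : ℕ) (hm : 1 ≤ m)
    (t : Fin (m+1) → ℝ) (ht : StrictMono t) (i j : Fin (m+1)) :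
    (∑ k, Cblk lam ω t i k * Kblk lam ω t k j) = if i = j then 1 else 0 := by
  have hgap : ∀ (k : ℕ) (h : k+1 ≤ m),
      gapN t k = t ⟨k+1, by omega⟩ - t ⟨k, by omega⟩ := fun k h => dif_pos h
  have hgappos : ∀ (k : ℕ) (h : k+1 ≤ m), 0 < gapN t k := by
    intro k h
    rw [hgap k h]
    have := ht (show (⟨k, by omega⟩ : Fin (m+1)) < ⟨k+1, by omega⟩ by simp [Fin.lt_def])
    linarith
  have hne : ∀ d : ℝ, 0 < d → 1 - Real.exp (-(2*lam)*d) ≠ 0 := by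
    intro d hd
    have h1 : Real.exp (-(2*lam)*d) < 1 := Real.exp_lt_one_iff.mpr (by nlinarith)
    intro h; linarith
  rcases Nat.eq_zero_or_pos j.val with hj0 | hj0
  · -- j = 0
    set k1 : Fin (m+1) := ⟨1, by omega⟩ with hk1
    have hk1v : k1.val = 1 := rfl
    have hjk1 : j ≠ k1 := by
      intro h; rw [h] at hj0; rw [hk1v] at hj0; omega
    have hd0 : gapN t 0 = t k1 - t j := by
      rw [hgap 0 hm]
      congr 1 <;> exact congrArg t (Fin.ext (by simp [hk1, hj0]))
    have hS : (∑ k, Cblk lam ω t i k * Kblk lam ω t k j)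
        = ∑ k ∈ ({j, k1} : Finset (Fin (m+1))), Cblk lam ω t i k * Kblk lam ω t k j := by
      refine (Finset.sum_subset (Finset.subset_univ _) ?_).symm
      intro x _ hx
      simp only [Finset.mem_insert, Finset.mem_singleton, not_or] at hx
      have hxv : x.val ≠ 1 := by
        intro h; exact hx.2 (Fin.ext (by rw [h, hk1v]))
      rw [Kblk_zero lam ω t hx.1 (by omega) (by omega), mul_zero]
    rw [hS, Finset.sum_pair hjk1]
    rw [Kblk_diag0 lam ω t hj0, Kblk_sub lam ω t (by omega), hj0]
    rcases eq_or_ne i j with rfl | hij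
    · rw [if_pos rfl, Cblk_le lam ω t le_rfl, Cblk_ge lam ω t (by rw [Fin.le_def]; omega)]
      rw [mul_smul_comm, mul_one, smul_mul_smul_comm, Emat_mul,
        show t i - t k1 + gapN t 0 = t i - t i by rw [hd0]; ring,
        sub_self, Emat_zero, ← hd0, ← add_smul]
      have h0 := hne (gapN t 0) (hgappos 0 hm)
      have hcoef : (1 - Real.exp (-(2*lam) * gapN t 0))⁻¹
            + Real.exp (-(2*lam) * gapN t 0) * -(1 - Real.exp (-(2*lam) * gapN t 0))⁻¹
          = (1:ℝ) := by
        have h2 : (1 - Real.exp (-(2*lam) * gapN t 0))⁻¹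
            + Real.exp (-(2*lam) * gapN t 0) * -(1 - Real.exp (-(2*lam) * gapN t 0))⁻¹
          = (1 - Real.exp (-(2*lam) * gapN t 0)) * (1 - Real.exp (-(2*lam) * gapN t 0))⁻¹ := by
          ring
        rw [h2, mul_inv_cancel₀ h0]
      rw [hcoef, one_smul]
    · rw [if_neg hij]
      have hile : j < i := by
        rcases lt_or_gt_of_ne hij with h | h
        · exfalso; rw [Fin.lt_def] at h; omega
        · exact h
      rw [Fin.lt_def] at hile
      rw [Cblk_le lam ω t (by rw [Fin.le_def]; omega),
        Cblk_le lam ω t (by rw [Fin.le_def]; omega)]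
      rw [mul_smul_comm, mul_one, mul_smul_comm, Emat_mul,
        show t i - t k1 + gapN t 0 = t i - t j by rw [hd0]; ring, ← add_smul]
      rw [show (1 - Real.exp (-(2*lam) * gapN t 0))⁻¹
            + -(1 - Real.exp (-(2*lam) * gapN t 0))⁻¹ = (0:ℝ) by ring, zero_smul]
  · rcases eq_or_lt_of_le (show j.val ≤ m by omega) with hjm | hjm
    · -- j = m
      set km : Fin (m+1) := ⟨m-1, by omega⟩ with hkm
      have hkmv : km.val = m - 1 := rfl
      have hjkm : km ≠ j := by
        intro h
        have := congrArg Fin.val h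
        rw [hkmv, hjm] at this; omega
      have hd1 : gapN t (m-1) = t j - t km := by
        rw [hgap (m-1) (by omega)]
        congr 1 <;> exact congrArg t (Fin.ext (by simp [hkm, hjm]; all_goals omega))
      have hd1pos : 0 < gapN t (m-1) := hgappos (m-1) (by omega)
      have h0 := hne (gapN t (m-1)) hd1pos
      have hS : (∑ k, Cblk lam ω t i k * Kblk lam ω t k j)
          = ∑ k ∈ ({km, j} : Finset (Fin (m+1))), Cblk lam ω t i k * Kblk lam ω t k j := by
        refine (Finset.sum_subset (Finset.subset_univ _) ?_).symm
        intro x _ hx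
        simp only [Finset.mem_insert, Finset.mem_singleton, not_or] at hx
        have hxlt := x.isLt
        have hxkm : x.val ≠ m - 1 := fun h => hx.1 (Fin.ext (h.trans hkmv.symm))
        rw [Kblk_zero lam ω t hx.2 (by omega) (by omega), mul_zero]
      rw [hS, Finset.sum_pair hjkm]
      rw [Kblk_super lam ω t (by omega), hkmv, Kblk_diagm lam ω t hjm (by omega)]
      rcases eq_or_ne i j with rfl | hij
      · rw [if_pos rfl, Cblk_le lam ω t (show km ≤ i by rw [Fin.le_def]; omega),
          Cblk_le lam ω t le_rfl]
        rw [mul_smul_comm, Emat_mul,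
          show t i - t km + -gapN t (m-1) = t i - t i by rw [hd1]; ring,
          mul_smul_comm, mul_one, sub_self, Emat_zero, ← add_smul]
        have hcoef : -(Real.exp (-(2*lam) * gapN t (m-1))
              * (1 - Real.exp (-(2*lam) * gapN t (m-1)))⁻¹)
            + (1 - Real.exp (-(2*lam) * gapN t (m-1)))⁻¹ = (1:ℝ) := by
          have h2 : -(Real.exp (-(2*lam) * gapN t (m-1))
                * (1 - Real.exp (-(2*lam) * gapN t (m-1)))⁻¹)
              + (1 - Real.exp (-(2*lam) * gapN t (m-1)))⁻¹
            = (1 - Real.exp (-(2*lam) * gapN t (m-1)))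
                * (1 - Real.exp (-(2*lam) * gapN t (m-1)))⁻¹ := by ring
          rw [h2, mul_inv_cancel₀ h0]
        rw [hcoef, one_smul]
      · rw [if_neg hij]
        have hvne : i.val ≠ j.val := fun h => hij (Fin.ext h)
        have hilt : i.val < m := by omega
        rw [Cblk_ge lam ω t (show i ≤ km by rw [Fin.le_def]; omega),
          Cblk_ge lam ω t (show i ≤ j by rw [Fin.le_def]; omega)]
        rw [smul_mul_smul_comm, Emat_mul,
          show t i - t km + -gapN t (m-1) = t i - t j by rw [hd1]; ring,
          smul_mul_smul_comm, mul_one, ← add_smul]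
        have hrel : Real.exp (-(2*lam) * (t km - t i)) * Real.exp (-(2*lam) * gapN t (m-1))
            = Real.exp (-(2*lam) * (t j - t i)) := by
          rw [← Real.exp_add]; congr 1; rw [hd1]; ring
        rw [show Real.exp (-(2*lam) * (t km - t i))
              * -(Real.exp (-(2*lam) * gapN t (m-1))
                  * (1 - Real.exp (-(2*lam) * gapN t (m-1)))⁻¹)
            + Real.exp (-(2*lam) * (t j - t i))
              * (1 - Real.exp (-(2*lam) * gapN t (m-1)))⁻¹ = (0:ℝ) by
          rw [← hrel]; ring, zero_smul]
    · -- 0 < j < m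
      set km : Fin (m+1) := ⟨j.val - 1, by omega⟩ with hkm
      set kp : Fin (m+1) := ⟨j.val + 1, by omega⟩ with hkp
      have hkmv : km.val = j.val - 1 := rfl
      have hkpv : kp.val = j.val + 1 := rfl
      have hkmj : km ≠ j := by
        intro h; have := congrArg Fin.val h; rw [hkmv] at this; omega
      have hjkp : j ≠ kp := by
        intro h; have := congrArg Fin.val h; rw [hkpv] at this; omega
      have hkmnot : km ∉ ({j, kp} : Finset (Fin (m+1))) := by
        simp only [Finset.mem_insert, Finset.mem_singleton, not_or]
        constructor
        · exact hkmj
        · intro h; have := congrArg Fin.val h; rw [hkmv, hkpv] at this; omega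
      have hdp : gapN t (j.val - 1) = t j - t km := by
        rw [hgap (j.val - 1) (by omega)]
        congr 1 <;> exact congrArg t (Fin.ext (by simp [hkm]; all_goals omega))
      have hdj : gapN t j.val = t kp - t j := by
        rw [hgap j.val (by omega)]
      have hdppos : 0 < gapN t (j.val - 1) := hgappos _ (by omega)
      have hdjpos : 0 < gapN t j.val := hgappos _ (by omega)
      have h0p := hne _ hdppos
      have h0j := hne _ hdjpos
      have hS : (∑ k, Cblk lam ω t i k * Kblk lam ω t k j)
          = ∑ k ∈ ({km, j, kp} : Finset (Fin (m+1))), Cblk lam ω t i k * Kblk lam ω t k j := by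
        refine (Finset.sum_subset (Finset.subset_univ _) ?_).symm
        intro x _ hx
        simp only [Finset.mem_insert, Finset.mem_singleton, not_or] at hx
        have hxkm : x.val ≠ j.val - 1 := fun h => hx.1 (Fin.ext (h.trans hkmv.symm))
        have hxkp : x.val ≠ j.val + 1 := fun h => hx.2.2 (Fin.ext (h.trans hkpv.symm))
        rw [Kblk_zero lam ω t hx.2.1 (by omega) (by omega), mul_zero]
      rw [hS, Finset.sum_insert hkmnot, Finset.sum_pair hjkp]
      rw [Kblk_super lam ω t (by omega), hkmv,
        Kblk_diagmid lam ω t (by omega) (by omega),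
        Kblk_sub lam ω t (by omega)]
      rcases eq_or_ne i j with rfl | hij
      · rw [if_pos rfl, Cblk_le lam ω t (show km ≤ i by rw [Fin.le_def]; omega),
          Cblk_le lam ω t le_rfl, Cblk_ge lam ω t (show i ≤ kp by rw [Fin.le_def]; omega)]
        rw [mul_smul_comm, Emat_mul,
          show t i - t km + -gapN t (i.val - 1) = t i - t i by rw [hdp]; ring,
          mul_smul_comm, mul_one,
          smul_mul_smul_comm, Emat_mul,
          show t i - t kp + gapN t i.val = t i - t i by rw [hdj]; ring,
          sub_self, Emat_zero,
          show t kp - t i = gapN t i.val by rw [hdj],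
          ← add_smul, ← add_smul]
        have e2 : (1 - Real.exp (-(2*lam) * gapN t i.val))
            * (1 - Real.exp (-(2*lam) * gapN t i.val))⁻¹ = 1 := mul_inv_cancel₀ h0j
        rw [show -(Real.exp (-(2*lam) * gapN t (i.val - 1))
              * (1 - Real.exp (-(2*lam) * gapN t (i.val - 1)))⁻¹)
            + ((1 - Real.exp (-(2*lam) * gapN t i.val))⁻¹
              + Real.exp (-(2*lam) * gapN t (i.val - 1))
                * (1 - Real.exp (-(2*lam) * gapN t (i.val - 1)))⁻¹
              + Real.exp (-(2*lam) * gapN t i.val)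
                * -(1 - Real.exp (-(2*lam) * gapN t i.val))⁻¹) = (1:ℝ) by
          linear_combination e2, one_smul]
      · rw [if_neg hij]
        have hvne : i.val ≠ j.val := fun h => hij (Fin.ext h)
        rcases lt_or_gt_of_ne hvne with hilt | higt
        · -- i < j
          rw [Cblk_ge lam ω t (show i ≤ km by rw [Fin.le_def]; omega),
            Cblk_ge lam ω t (show i ≤ j by rw [Fin.le_def]; omega),
            Cblk_ge lam ω t (show i ≤ kp by rw [Fin.le_def]; omega)]
          rw [smul_mul_smul_comm, Emat_mul,
            show t i - t km + -gapN t (j.val - 1) = t i - t j by rw [hdp]; ring,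
            smul_mul_smul_comm, mul_one,
            smul_mul_smul_comm, Emat_mul,
            show t i - t kp + gapN t j.val = t i - t j by rw [hdj]; ring,
            ← add_smul, ← add_smul]
          have h1 : Real.exp (-(2*lam) * (t km - t i)) * Real.exp (-(2*lam) * gapN t (j.val - 1))
              = Real.exp (-(2*lam) * (t j - t i)) := by
            rw [← Real.exp_add]; congr 1; rw [hdp]; ring
          have h2 : Real.exp (-(2*lam) * (t j - t i)) * Real.exp (-(2*lam) * gapN t j.val)
              = Real.exp (-(2*lam) * (t kp - t i)) := by
            rw [← Real.exp_add]; congr 1; rw [hdj]; ring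
          have e1 : (1 - Real.exp (-(2*lam) * gapN t (j.val - 1)))
              * (1 - Real.exp (-(2*lam) * gapN t (j.val - 1)))⁻¹ = 1 := mul_inv_cancel₀ h0p
          have e2 : (1 - Real.exp (-(2*lam) * gapN t j.val))
              * (1 - Real.exp (-(2*lam) * gapN t j.val))⁻¹ = 1 := mul_inv_cancel₀ h0j
          rw [show Real.exp (-(2*lam) * (t km - t i))
                * -(Real.exp (-(2*lam) * gapN t (j.val - 1))
                    * (1 - Real.exp (-(2*lam) * gapN t (j.val - 1)))⁻¹)
              + (Real.exp (-(2*lam) * (t j - t i))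
                  * ((1 - Real.exp (-(2*lam) * gapN t j.val))⁻¹
                    + Real.exp (-(2*lam) * gapN t (j.val - 1))
                      * (1 - Real.exp (-(2*lam) * gapN t (j.val - 1)))⁻¹)
                + Real.exp (-(2*lam) * (t kp - t i))
                  * -(1 - Real.exp (-(2*lam) * gapN t j.val))⁻¹) = (0:ℝ) by
            rw [← h2, ← h1]
            linear_combination (Real.exp (-(2*lam) * (t km - t i))
              * Real.exp (-(2*lam) * gapN t (j.val - 1))) * e2
              - (Real.exp (-(2*lam) * (t km - t i))
                * Real.exp (-(2*lam) * gapN t (j.val - 1))) * e1, zero_smul]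
        · -- j < i
          rw [Cblk_le lam ω t (show km ≤ i by rw [Fin.le_def]; omega),
            Cblk_le lam ω t (show j ≤ i by rw [Fin.le_def]; omega),
            Cblk_le lam ω t (show kp ≤ i by rw [Fin.le_def]; omega)]
          rw [mul_smul_comm, Emat_mul,
            show t i - t km + -gapN t (j.val - 1) = t i - t j by rw [hdp]; ring,
            mul_smul_comm, mul_one,
            mul_smul_comm, Emat_mul,
            show t i - t kp + gapN t j.val = t i - t j by rw [hdj]; ring,
            ← add_smul, ← add_smul]
          rw [show -(Real.exp (-(2*lam) * gapN t (j.val - 1))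
                * (1 - Real.exp (-(2*lam) * gapN t (j.val - 1)))⁻¹)
              + ((1 - Real.exp (-(2*lam) * gapN t j.val))⁻¹
                + Real.exp (-(2*lam) * gapN t (j.val - 1))
                  * (1 - Real.exp (-(2*lam) * gapN t (j.val - 1)))⁻¹
                + -(1 - Real.exp (-(2*lam) * gapN t j.val))⁻¹) = (0:ℝ) by ring, zero_smul]


/-- The inverse of the covariance matrix `C(n)` of a complex OU process observed at
design points `0 = t₁ < t₂ < ⋯ < tₙ = 1` is the block tridiagonal matrix with
diagonal blocks `U₁, V₂, …, V_{n−1}, U_{n−1}`, super-diagonal blocks `−exp(Aᵀdₖ)Uₖ`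
and sub-diagonal blocks `−exp(Adₖ)Uₖ`. -/
theorem Cmat_mul_tridiagonal_inverse (lam ω : ℝ) (hlam : 0 < lam) (m : ℕ) (hm : 1 ≤ m)
    (t : Fin (m + 1) → ℝ) (ht : StrictMono t) (ht0 : t 0 = 0) (ht1 : t (Fin.last m) = 1) :
    Cmat lam ω t *
      Matrix.of (fun p q : Fin (m + 1) × Fin 2 => Kblk lam ω t p.1 q.1 p.2 q.2) = 1 := by
  ext p q
  rw [Matrix.mul_apply, Fintype.sum_prod_type]
  have h1 : ∀ k : Fin (m+1),
      (∑ c : Fin 2, Cmat lam ω t p (k,c) *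
        Matrix.of (fun p q : Fin (m + 1) × Fin 2 => Kblk lam ω t p.1 q.1 p.2 q.2) (k,c) q)
      = (Cblk lam ω t p.1 k * Kblk lam ω t k q.1) p.2 q.2 := by
    intro k; rw [Matrix.mul_apply]; rfl
  rw [Finset.sum_congr rfl (fun k _ => h1 k), ← Matrix.sum_apply,
    key_sum lam ω hlam m hm t ht p.1 q.1]
  by_cases h : p.1 = q.1 <;> simp [Matrix.one_apply, Prod.ext_iff, h]
end

section
/- Let λ > 0, ω ∈ ℝ, and design points 0 = t₁ < t₂ < ... < tₙ = 1 with gaps dᵢ = tᵢ₊₁ − tᵢ. Then det C(n) = ∏_{i=1}^{n−1} det(I₂ − exp((A + Aᵀ)dᵢ)); moreover, since A + Aᵀ = −2λI₂, this product equals ∏_{i=1}^{n−1} (1 − e^{−2λdᵢ})². -/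
open Matrix

namespace OUdet

lemma commA (lam ω : ℝ) : Commute (Amat lam ω) (Amat lam ω)ᵀ := by
  show _ * _ = _ * _
  ext i j
  fin_cases i <;> fin_cases j <;>
    simp [Amat, Matrix.mul_apply, Fin.sum_univ_succ, Matrix.vecHead, Matrix.vecTail] <;> ring

lemma expA_add (lam ω a b : ℝ) :
    NormedSpace.exp ((a + b) • Amat lam ω) =
      NormedSpace.exp (a • Amat lam ω) * NormedSpace.exp (b • Amat lam ω) := by
  rw [add_smul]
  exact Matrix.exp_add_of_commute _ _ (((Commute.refl (Amat lam ω)).smul_left a).smul_right b)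

lemma expAAT (lam ω d : ℝ) :
    NormedSpace.exp (d • Amat lam ω) * NormedSpace.exp (d • (Amat lam ω)ᵀ) =
      NormedSpace.exp (d • (Amat lam ω + (Amat lam ω)ᵀ)) := by
  rw [smul_add, Matrix.exp_add_of_commute _ _ (((commA lam ω).smul_left d).smul_right d)]

lemma AAT (lam ω : ℝ) : Amat lam ω + (Amat lam ω)ᵀ = diagonal (fun _ => -2 * lam) := by
  ext i j
  fin_cases i <;> fin_cases j <;>
    simp [Amat, diagonal, Matrix.vecHead, Matrix.vecTail] <;> ring

lemma det_one_sub (lam d ω : ℝ) :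
    ((1 : Matrix (Fin 2) (Fin 2) ℝ) -
      NormedSpace.exp (d • (Amat lam ω + (Amat lam ω)ᵀ))).det =
      (1 - Real.exp (-2 * lam * d)) ^ 2 := by
  rw [AAT, ← diagonal_smul, Matrix.exp_diagonal, ← diagonal_one, diagonal_sub, det_diagonal]
  have h : (NormedSpace.exp (d • fun _ : Fin 2 => -2 * lam))
      = fun _ : Fin 2 => Real.exp (-2 * lam * d) := by
    funext i
    rw [Pi.exp_def]
    simp only [Pi.smul_apply, smul_eq_mul, ← Real.exp_eq_exp_ℝ]
    ring_nf
  rw [h, Fin.prod_univ_two]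
  ring

noncomputable def blk {n : ℕ} (B : Fin n → Fin n → Matrix (Fin 2) (Fin 2) ℝ) :
    Matrix (Fin n × Fin 2) (Fin n × Fin 2) ℝ := fun p q => B p.1 q.1 p.2 q.2

lemma blk_mul {n : ℕ} (B C : Fin n → Fin n → Matrix (Fin 2) (Fin 2) ℝ) :
    blk B * blk C = blk (fun i j => ∑ k, B i k * C k j) := by
  ext p q
  rw [Matrix.mul_apply]
  show _ = (∑ k, B p.1 k * C k q.1) p.2 q.2
  rw [Matrix.sum_apply, Fintype.sum_prod_type]
  simp only [blk]
  exact Finset.sum_congr rfl fun k _ => (Matrix.mul_apply).symm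

/-- Splitting the last block index off. -/
def sp (n : ℕ) : ((Fin (n + 1) × Fin 2) ⊕ (Fin 1 × Fin 2)) ≃ (Fin (n + 2) × Fin 2) where
  toFun := Sum.elim (fun p => (p.1.castSucc, p.2)) (fun p => (Fin.last (n + 1), p.2))
  invFun q := if h : q.1 = Fin.last (n + 1) then Sum.inr (0, q.2)
    else Sum.inl (q.1.castPred h, q.2)
  left_inv p := by
    rcases p with p | p
    · simp [(Fin.castSucc_lt_last p.1).ne]
    · simp [Subsingleton.elim (0 : Fin 1) p.1]
  right_inv q := by
    by_cases h : q.1 = Fin.last (n + 1)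
    · dsimp only
      rw [dif_pos h]
      exact Prod.ext h.symm rfl
    · simp [h]

lemma det_via_blocks {n : ℕ} (M : Matrix (Fin (n + 2) × Fin 2) (Fin (n + 2) × Fin 2) ℝ) :
    M.det = (fromBlocks
      (fun (p : Fin (n + 1) × Fin 2) (q : Fin (n + 1) × Fin 2) =>
        M (p.1.castSucc, p.2) (q.1.castSucc, q.2))
      (fun (p : Fin (n + 1) × Fin 2) (q : Fin 1 × Fin 2) =>
        M (p.1.castSucc, p.2) (Fin.last (n + 1), q.2))
      (fun (p : Fin 1 × Fin 2) (q : Fin (n + 1) × Fin 2) =>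
        M (Fin.last (n + 1), p.2) (q.1.castSucc, q.2))
      (fun (p : Fin 1 × Fin 2) (q : Fin 1 × Fin 2) =>
        M (Fin.last (n + 1), p.2) (Fin.last (n + 1), q.2))).det := by
  have h : M.submatrix (sp n) (sp n) = fromBlocks
      (fun (p : Fin (n + 1) × Fin 2) (q : Fin (n + 1) × Fin 2) =>
        M (p.1.castSucc, p.2) (q.1.castSucc, q.2))
      (fun (p : Fin (n + 1) × Fin 2) (q : Fin 1 × Fin 2) =>
        M (p.1.castSucc, p.2) (Fin.last (n + 1), q.2))
      (fun (p : Fin 1 × Fin 2) (q : Fin (n + 1) × Fin 2) =>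
        M (Fin.last (n + 1), p.2) (q.1.castSucc, q.2))
      (fun (p : Fin 1 × Fin 2) (q : Fin 1 × Fin 2) =>
        M (Fin.last (n + 1), p.2) (Fin.last (n + 1), q.2)) := by
    ext p q
    rcases p with p | p <;> rcases q with q | q <;> rfl
  rw [← Matrix.det_submatrix_equiv_self (sp n) M, h]

def e2 : (Fin 1 × Fin 2) ≃ Fin 2 where
  toFun p := p.2
  invFun b := (0, b)
  left_inv p := Prod.ext (Subsingleton.elim _ _) rfl
  right_inv _ := rfl

lemma det_blk1 (S : Matrix (Fin 2) (Fin 2) ℝ) :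
    (Matrix.det fun (p q : Fin 1 × Fin 2) => S p.2 q.2) = S.det := by
  rw [← Matrix.det_submatrix_equiv_self e2 S]
  rfl

/-- the 2×2 blocks of `Cmat`. -/
noncomputable def Cb (lam ω : ℝ) {n : ℕ} (t : Fin n → ℝ) (i j : Fin n) :
    Matrix (Fin 2) (Fin 2) ℝ :=
  if j ≤ i then NormedSpace.exp ((t i - t j) • Amat lam ω)
  else NormedSpace.exp ((t j - t i) • (Amat lam ω)ᵀ)

lemma Cmat_eq_blk (lam ω : ℝ) {m : ℕ} (t : Fin (m + 1) → ℝ) :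
    Cmat lam ω t = blk (Cb lam ω t) := rfl

/-- the 2×2 blocks of the elimination matrix `L`. -/
noncomputable def Lb {n : ℕ} (E : Matrix (Fin 2) (Fin 2) ℝ) (i k : Fin (n + 2)) :
    Matrix (Fin 2) (Fin 2) ℝ :=
  if i = k then 1
  else if i = Fin.last (n + 1) ∧ k = (Fin.last n).castSucc then -E else 0

/-- the 2×2 blocks of `L * C`. -/
noncomputable def Db (lam ω : ℝ) {n : ℕ} (t : Fin (n + 2) → ℝ) (i j : Fin (n + 2)) :
    Matrix (Fin 2) (Fin 2) ℝ :=
  if i = Fin.last (n + 1) then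
    (if j = Fin.last (n + 1) then
      1 - NormedSpace.exp
        ((t (Fin.last (n + 1)) - t ((Fin.last n).castSucc)) • (Amat lam ω + (Amat lam ω)ᵀ))
     else 0)
  else Cb lam ω t i j

lemma sum_Lb_Cb (lam ω : ℝ) {n : ℕ} (t : Fin (n + 2) → ℝ)
    (i j : Fin (n + 2)) :
    (∑ k, Lb (NormedSpace.exp ((t (Fin.last (n + 1)) - t ((Fin.last n).castSucc)) • Amat lam ω))
        i k * Cb lam ω t k j) = Db lam ω t i j := by
  set d : ℝ := t (Fin.last (n + 1)) - t ((Fin.last n).castSucc) with hd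
  set E := NormedSpace.exp (d • Amat lam ω) with hE
  have hprev : (Fin.last n).castSucc ≠ Fin.last (n + 1) := (Fin.castSucc_lt_last _).ne
  by_cases hi : i = Fin.last (n + 1)
  · subst hi
    have hterm : ∀ k, Lb E (Fin.last (n + 1)) k * Cb lam ω t k j =
        (if k = Fin.last (n + 1) then Cb lam ω t (Fin.last (n + 1)) j else 0) +
        (if k = (Fin.last n).castSucc then -E * Cb lam ω t ((Fin.last n).castSucc) j else 0) := by
      intro k
      by_cases h1 : k = Fin.last (n + 1)
      · subst h1
        rw [Lb, if_pos rfl, one_mul, if_pos rfl, if_neg (Ne.symm hprev), add_zero]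
      · rw [Lb, if_neg (fun h => h1 h.symm), if_neg h1, zero_add]
        by_cases h2 : k = (Fin.last n).castSucc
        · rw [if_pos ⟨rfl, h2⟩, if_pos h2, h2]
        · rw [if_neg (fun h => h2 h.2), if_neg h2, zero_mul]
    simp only [hterm, Finset.sum_add_distrib, Finset.sum_ite_eq', Finset.mem_univ, if_true]
    rw [Db, if_pos rfl]
    by_cases hj : j = Fin.last (n + 1)
    · subst hj
      rw [if_pos rfl]
      rw [Cb, if_pos le_rfl, sub_self, zero_smul, NormedSpace.exp_zero]
      rw [Cb, if_neg (not_le.mpr (Fin.castSucc_lt_last _))]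
      rw [neg_mul, ← sub_eq_add_neg, hE, expAAT]
    · rw [if_neg hj]
      have hjlt : j < Fin.last (n + 1) := lt_of_le_of_ne (Fin.le_last j) hj
      have hjle : j ≤ (Fin.last n).castSucc := by
        rw [Fin.le_castSucc_iff, Fin.succ_last]
        exact hjlt
      rw [Cb, if_pos (Fin.le_last j), Cb, if_pos hjle, hE, neg_mul, ← expA_add]
      have : d + (t ((Fin.last n).castSucc) - t j) = t (Fin.last (n + 1)) - t j := by
        rw [hd]; ring
      rw [this, add_neg_cancel]
  · rw [Finset.sum_eq_single i]
    · rw [Lb, if_pos rfl, one_mul, Db, if_neg hi]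
    · intro k _ hk
      rw [Lb, if_neg (fun h => hk h.symm), if_neg (fun h => hi h.1), zero_mul]
    · intro h
      exact absurd (Finset.mem_univ i) h

lemma det_L {n : ℕ} (E : Matrix (Fin 2) (Fin 2) ℝ) : (blk (Lb (n := n) E)).det = 1 := by
  rw [det_via_blocks]
  have hTL : (fun (p : Fin (n + 1) × Fin 2) (q : Fin (n + 1) × Fin 2) =>
      blk (Lb (n := n) E) (p.1.castSucc, p.2) (q.1.castSucc, q.2)) =
      (1 : Matrix (Fin (n + 1) × Fin 2) (Fin (n + 1) × Fin 2) ℝ) := by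
    funext p q
    show Lb E p.1.castSucc q.1.castSucc p.2 q.2 = _
    by_cases h : p.1 = q.1
    · rw [Lb, if_pos (by rw [h])]
      simp [Matrix.one_apply, Prod.ext_iff, h]
    · rw [Lb, if_neg (by simpa [Fin.castSucc_inj] using h),
        if_neg (fun hh => (Fin.castSucc_lt_last p.1).ne hh.1)]
      simp [Matrix.one_apply, Prod.ext_iff, h]
  have hTR : (fun (p : Fin (n + 1) × Fin 2) (q : Fin 1 × Fin 2) =>
      blk (Lb (n := n) E) (p.1.castSucc, p.2) (Fin.last (n + 1), q.2)) =
      (0 : Matrix (Fin (n + 1) × Fin 2) (Fin 1 × Fin 2) ℝ) := by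
    funext p q
    show Lb E p.1.castSucc (Fin.last (n + 1)) p.2 q.2 = _
    rw [Lb, if_neg (Fin.castSucc_lt_last p.1).ne,
      if_neg (fun hh => (Fin.castSucc_lt_last p.1).ne hh.1)]
    rfl
  have hBR : (fun (p : Fin 1 × Fin 2) (q : Fin 1 × Fin 2) =>
      blk (Lb (n := n) E) (Fin.last (n + 1), p.2) (Fin.last (n + 1), q.2)) =
      (1 : Matrix (Fin 1 × Fin 2) (Fin 1 × Fin 2) ℝ) := by
    funext p q
    show Lb E (Fin.last (n + 1)) (Fin.last (n + 1)) p.2 q.2 = _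
    rw [Lb, if_pos rfl]
    simp [Matrix.one_apply, Prod.ext_iff, Subsingleton.elim p.1 q.1]
  rw [hTL, hTR, hBR]
  refine (det_fromBlocks_zero₁₂ ..).trans ?_
  rw [det_one, one_mul, det_one]

lemma det_step (lam ω : ℝ) {n : ℕ} (t : Fin (n + 2) → ℝ) :
    (Cmat lam ω t).det = (Cmat lam ω (t ∘ Fin.castSucc)).det *
      ((1 : Matrix (Fin 2) (Fin 2) ℝ) - NormedSpace.exp
        ((t (Fin.last (n + 1)) - t ((Fin.last n).castSucc)) •
          (Amat lam ω + (Amat lam ω)ᵀ))).det := by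
  set E := NormedSpace.exp
    ((t (Fin.last (n + 1)) - t ((Fin.last n).castSucc)) • Amat lam ω) with hE
  have hmul : blk (Lb (n := n) E) * Cmat lam ω t = blk (Db lam ω t) := by
    rw [Cmat_eq_blk, blk_mul]
    exact congrArg blk (funext fun i => funext fun j => sum_Lb_Cb lam ω t i j)
  have hdet : (blk (Db lam ω t)).det = (Cmat lam ω t).det := by
    rw [← hmul, det_mul, det_L, one_mul]
  rw [← hdet, det_via_blocks]
  have hTL : (fun (p : Fin (n + 1) × Fin 2) (q : Fin (n + 1) × Fin 2) =>
      blk (Db lam ω t) (p.1.castSucc, p.2) (q.1.castSucc, q.2)) =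
      Cmat lam ω (t ∘ Fin.castSucc) := by
    funext p q
    show Db lam ω t p.1.castSucc q.1.castSucc p.2 q.2 = _
    rw [Db, if_neg (Fin.castSucc_lt_last p.1).ne, Cb]
    rcases le_or_gt q.1 p.1 with h | h
    · rw [if_pos (Fin.castSucc_le_castSucc_iff.mpr h)]
      show _ = (if q.1 ≤ p.1 then NormedSpace.exp
          ((t p.1.castSucc - t q.1.castSucc) • Amat lam ω) else _) p.2 q.2
      rw [if_pos h]
    · rw [if_neg (by simpa [Fin.castSucc_le_castSucc_iff] using not_le.mpr h)]
      show _ = (if q.1 ≤ p.1 then _ else NormedSpace.exp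
          ((t q.1.castSucc - t p.1.castSucc) • (Amat lam ω)ᵀ)) p.2 q.2
      rw [if_neg (not_le.mpr h)]
  have hBL : (fun (p : Fin 1 × Fin 2) (q : Fin (n + 1) × Fin 2) =>
      blk (Db lam ω t) (Fin.last (n + 1), p.2) (q.1.castSucc, q.2)) =
      (0 : Matrix (Fin 1 × Fin 2) (Fin (n + 1) × Fin 2) ℝ) := by
    funext p q
    show Db lam ω t (Fin.last (n + 1)) q.1.castSucc p.2 q.2 = _
    rw [Db, if_pos rfl, if_neg (Fin.castSucc_lt_last q.1).ne]
    rfl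
  have hBR : (fun (p : Fin 1 × Fin 2) (q : Fin 1 × Fin 2) =>
      blk (Db lam ω t) (Fin.last (n + 1), p.2) (Fin.last (n + 1), q.2)) =
      (fun (p : Fin 1 × Fin 2) (q : Fin 1 × Fin 2) =>
        ((1 : Matrix (Fin 2) (Fin 2) ℝ) - NormedSpace.exp
          ((t (Fin.last (n + 1)) - t ((Fin.last n).castSucc)) •
            (Amat lam ω + (Amat lam ω)ᵀ))) p.2 q.2) := by
    funext p q
    show Db lam ω t (Fin.last (n + 1)) (Fin.last (n + 1)) p.2 q.2 = _
    rw [Db, if_pos rfl, if_pos rfl]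
  rw [hTL, hBL, hBR]
  refine (det_fromBlocks_zero₂₁ ..).trans ?_
  rw [det_blk1]

lemma det_aux (lam ω : ℝ) : ∀ (m : ℕ) (t : Fin (m + 1) → ℝ),
    (Cmat lam ω t).det =
      ∏ i : Fin m,
        ((1 : Matrix (Fin 2) (Fin 2) ℝ) -
          NormedSpace.exp
            ((t i.succ - t i.castSucc) • (Amat lam ω + (Amat lam ω)ᵀ))).det := by
  intro m
  induction m with
  | zero =>
    intro t
    have h : Cmat lam ω t = 1 := by
      ext p q
      have h1 : p.1 = q.1 := by omega
      simp only [Cmat]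
      rw [if_pos (le_of_eq h1.symm), h1, sub_self, zero_smul, NormedSpace.exp_zero]
      simp [Matrix.one_apply, Prod.ext_iff, h1]
    rw [h, det_one]
    simp
  | succ n ih =>
    intro t
    rw [det_step lam ω t, ih (t ∘ Fin.castSucc), Fin.prod_univ_castSucc]
    congr 1

end OUdet

/-- For a complex OU process observed at design points `0 = t₁ < t₂ < ⋯ < tₙ = 1`
with gaps `dᵢ = tᵢ₊₁ − tᵢ`, the determinant of the covariance matrix satisfies
`det C(n) = ∏ᵢ det(I₂ − exp((A+Aᵀ)dᵢ)) = ∏ᵢ (1 − e^{−2λdᵢ})²`. -/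
theorem det_Cmat (lam ω : ℝ) (hlam : 0 < lam) (m : ℕ) (hm : 1 ≤ m)
    (t : Fin (m + 1) → ℝ) (ht : StrictMono t) (ht0 : t 0 = 0) (ht1 : t (Fin.last m) = 1) :
    (Cmat lam ω t).det =
        ∏ i : Fin m,
          ((1 : Matrix (Fin 2) (Fin 2) ℝ) -
            NormedSpace.exp
              ((t i.succ - t i.castSucc) • (Amat lam ω + (Amat lam ω)ᵀ))).det ∧
      (Cmat lam ω t).det =
        ∏ i : Fin m, (1 - Real.exp (-2 * lam * (t i.succ - t i.castSucc))) ^ 2 := by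
  have h := OUdet.det_aux lam ω m t
  refine ⟨h, ?_⟩
  rw [h]
  exact Finset.prod_congr rfl fun i _ => OUdet.det_one_sub lam _ ω
end

section
/- Let λ > 0, ω ∈ ℝ, and design points 0 = t₁ < t₂ < ... < tₙ = 1 with gaps dᵢ = tᵢ₊₁ − tᵢ. Then H(n)·C(n)⁻¹·H(n)ᵀ = G(n)·I₂, where G(n) = 1 + ∑_{ℓ=1}^{n−1} g(d_ℓ) and g(x) = (1 − 2e^{−λx}cos(ωx) + e^{−2λx})/(1 − e^{−2λx}) for x > 0. -/
open Matrix

/-- The `2 × 2n` matrix `H(n)` consisting of `n` horizontally concatenated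
copies of the `2 × 2` identity matrix. -/
noncomputable def Hmat (m : ℕ) : Matrix (Fin 2) (Fin (m + 1) × Fin 2) ℝ :=
  fun a p => (1 : Matrix (Fin 2) (Fin 2) ℝ) a p.2

/-- `g(x) = (1 − 2e^{−λx}cos(ωx) + e^{−2λx}) / (1 − e^{−2λx})`. -/
noncomputable def gfun (lam ω x : ℝ) : ℝ :=
  (1 - 2 * Real.exp (-lam * x) * Real.cos (ω * x) + Real.exp (-2 * lam * x)) /
    (1 - Real.exp (-2 * lam * x))

open Complex


noncomputable def toR2 : ℂ →+* Matrix (Fin 2) (Fin 2) ℝ where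
  toFun z := !![z.re, -z.im; z.im, z.re]
  map_one' := by ext a b; fin_cases a <;> fin_cases b <;> simp [Matrix.one_apply]
  map_mul' z w := by
    ext a b
    fin_cases a <;> fin_cases b <;>
      simp [Matrix.mul_apply, Fin.sum_univ_two] <;> ring
  map_zero' := by ext a b; fin_cases a <;> fin_cases b <;> simp <;> ring
  map_add' z w := by ext a b; fin_cases a <;> fin_cases b <;> simp <;> ring

lemma toR2_continuous : Continuous (toR2 : ℂ → Matrix (Fin 2) (Fin 2) ℝ) := by
  apply continuous_matrix
  intro i j
  fin_cases i <;> fin_cases j <;> simp [toR2] <;> fun_prop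

lemma toR2_exp (w : ℂ) : NormedSpace.exp (toR2 w) = toR2 (Complex.exp w) := by
  letI : SeminormedRing (Matrix (Fin 2) (Fin 2) ℝ) := Matrix.linftyOpSemiNormedRing
  letI : NormedRing (Matrix (Fin 2) (Fin 2) ℝ) := Matrix.linftyOpNormedRing
  letI : NormedAlgebra ℝ (Matrix (Fin 2) (Fin 2) ℝ) := Matrix.linftyOpNormedAlgebra
  have h1 : toR2 (NormedSpace.exp w) = NormedSpace.exp (toR2 w) :=
    NormedSpace.map_exp toR2 toR2_continuous w
  have h2 : NormedSpace.exp w = Complex.exp w := by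
    rw [Complex.exp_eq_exp_ℂ]
  rw [← h2, h1]


noncomputable def zc (lam ω : ℝ) : ℂ := -(lam : ℂ) + ω * Complex.I

noncomputable def ec (lam ω x : ℝ) : ℂ := Complex.exp (zc lam ω * x)

lemma ec_ne (lam ω x : ℝ) : ec lam ω x ≠ 0 := Complex.exp_ne_zero _

lemma zc_mul_re (lam ω x : ℝ) : (zc lam ω * x).re = -lam * x := by simp [zc]
lemma zc_mul_im (lam ω x : ℝ) : (zc lam ω * x).im = ω * x := by simp [zc]

lemma normSq_ec (lam ω x : ℝ) :
    Complex.normSq (ec lam ω x) = Real.exp (-(2 * lam) * x) := by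
  rw [ec, Complex.normSq_eq_norm_sq, Complex.norm_exp, sq, ← Real.exp_add, zc_mul_re]
  ring_nf

lemma ec_re (lam ω x : ℝ) : (ec lam ω x).re = Real.exp (-lam * x) * Real.cos (ω * x) := by
  rw [ec, Complex.exp_re, zc_mul_re, zc_mul_im]

lemma ec_div (lam ω : ℝ) (x y : ℝ) :
    ec lam ω x * (ec lam ω y)⁻¹ = Complex.exp (zc lam ω * ((x : ℂ) - (y : ℂ))) := by
  rw [mul_sub, Complex.exp_sub, div_eq_mul_inv, ec, ec]

lemma ec_div' (lam ω : ℝ) (x y : ℝ) :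
    ec lam ω x * (ec lam ω y)⁻¹ = Complex.exp (zc lam ω * ((x - y : ℝ) : ℂ)) := by
  rw [ec_div]; norm_num

lemma conj_mul_normSq_inv (z : ℂ) (hz : z ≠ 0) :
    (starRingEnd ℂ) z * ((Complex.normSq z : ℝ) : ℂ)⁻¹ = z⁻¹ := by
  have h2 : (starRingEnd ℂ) z ≠ 0 := by simpa using hz
  rw [← Complex.mul_conj, mul_inv,
    show (starRingEnd ℂ) z * (z⁻¹ * ((starRingEnd ℂ) z)⁻¹)
      = (starRingEnd ℂ) z * ((starRingEnd ℂ) z)⁻¹ * z⁻¹ from by ring,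
    mul_inv_cancel₀ h2, one_mul]

lemma mul_normSq_inv (z : ℂ) (hz : z ≠ 0) :
    z * ((Complex.normSq z : ℝ) : ℂ)⁻¹ = ((starRingEnd ℂ) z)⁻¹ := by
  rw [← Complex.mul_conj, mul_inv, ← mul_assoc, mul_inv_cancel₀ hz, one_mul]



def pmf {m : ℕ} (i : Fin (m + 1)) : Fin (m + 1) := ⟨i.val - 1, by omega⟩

noncomputable def Tm (lam ω : ℝ) {m : ℕ} (t : Fin (m + 1) → ℝ) :
    Matrix (Fin (m + 1)) (Fin (m + 1)) ℂ :=
  fun i j => if j ≤ i then ec lam ω (t i) * (ec lam ω (t j))⁻¹ else 0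

noncomputable def Km (lam ω : ℝ) {m : ℕ} (t : Fin (m + 1) → ℝ) :
    Matrix (Fin (m + 1)) (Fin (m + 1)) ℂ :=
  fun i j => if j ≤ i then ec lam ω (t i) * (ec lam ω (t j))⁻¹
    else (starRingEnd ℂ) (ec lam ω (t j) * (ec lam ω (t i))⁻¹)

noncomputable def Lm (lam ω : ℝ) {m : ℕ} (t : Fin (m + 1) → ℝ) :
    Matrix (Fin (m + 1)) (Fin (m + 1)) ℂ :=
  fun i j => if j = i then 1
    else if (j : ℕ) + 1 = (i : ℕ) then -(ec lam ω (t i) * (ec lam ω (t j))⁻¹) else 0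

noncomputable def dv (lam ω : ℝ) {m : ℕ} (t : Fin (m + 1) → ℝ) (i : Fin (m + 1)) : ℂ :=
  if (i : ℕ) = 0 then 1
  else ((1 - Complex.normSq (ec lam ω (t i)) / Complex.normSq (ec lam ω (t (pmf i))) : ℝ) : ℂ)

lemma tel (lam ω : ℝ) {m : ℕ} (t : Fin (m + 1) → ℝ) (p : Fin (m + 1)) :
    ∑ k : Fin (m + 1),
        (if k ≤ p then dv lam ω t k * ((Complex.normSq (ec lam ω (t k)) : ℝ) : ℂ)⁻¹ else 0)
      = ((Complex.normSq (ec lam ω (t p)) : ℝ) : ℂ)⁻¹ := by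
  induction p using Fin.induction with
  | zero =>
      simp only [Fin.le_zero_iff]
      rw [Finset.sum_ite_eq' Finset.univ (0 : Fin (m + 1))]
      simp [dv]
  | succ p ih =>
      have hsplit : ∀ k : Fin (m + 1),
          (if k ≤ p.succ then dv lam ω t k * ((Complex.normSq (ec lam ω (t k)) : ℝ) : ℂ)⁻¹ else 0)
          = (if k ≤ p.castSucc then
                dv lam ω t k * ((Complex.normSq (ec lam ω (t k)) : ℝ) : ℂ)⁻¹ else 0)
            + (if k = p.succ then
                dv lam ω t k * ((Complex.normSq (ec lam ω (t k)) : ℝ) : ℂ)⁻¹ else 0) := by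
        intro k
        rcases eq_or_ne k p.succ with rfl | hk
        · rw [if_pos le_rfl, if_pos rfl, if_neg (by
            simp only [Fin.le_def, Fin.coe_castSucc, Fin.val_succ]; omega), zero_add]
        · rw [if_neg hk, add_zero]
          by_cases h : k ≤ p.castSucc
          · rw [if_pos h, if_pos (by
              simp only [Fin.le_def, Fin.coe_castSucc, Fin.val_succ] at h ⊢; omega)]
          · rw [if_neg h, if_neg (by
              intro hks
              apply h
              simp only [Fin.le_def, Fin.coe_castSucc, Fin.val_succ] at hks ⊢
              have : (k : ℕ) ≠ (p : ℕ) + 1 := by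
                intro hv; exact hk (Fin.ext (by simpa using hv))
              omega)]
      rw [Finset.sum_congr rfl (fun k _ => hsplit k), Finset.sum_add_distrib, ih,
        Finset.sum_ite_eq' Finset.univ p.succ, if_pos (Finset.mem_univ _)]
      have h0 : ((p.succ : Fin (m + 1)) : ℕ) ≠ 0 := by simp
      have hpm : pmf p.succ = p.castSucc := by
        apply Fin.ext; simp [pmf]
      rw [dv, if_neg h0, hpm]
      have hNs : (0 : ℝ) < Complex.normSq (ec lam ω (t p.succ)) :=
        Complex.normSq_pos.mpr (ec_ne _ _ _)
      have hNc : (0 : ℝ) < Complex.normSq (ec lam ω (t p.castSucc)) :=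
        Complex.normSq_pos.mpr (ec_ne _ _ _)
      set Ns := Complex.normSq (ec lam ω (t p.succ))
      set Nc := Complex.normSq (ec lam ω (t p.castSucc))
      have : ((Nc : ℝ) : ℂ)⁻¹ + ((1 - Ns / Nc : ℝ) : ℂ) * ((Ns : ℝ) : ℂ)⁻¹ = ((Ns : ℝ) : ℂ)⁻¹ := by
        have hNs' : ((Ns : ℝ) : ℂ) ≠ 0 := by exact_mod_cast ne_of_gt hNs
        have hNc' : ((Nc : ℝ) : ℂ) ≠ 0 := by exact_mod_cast ne_of_gt hNc
        push_cast
        rw [div_eq_mul_inv]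
        field_simp
        try rw [mul_assoc, mul_inv_cancel₀ hNs', mul_one]
        try ring
      exact this

lemma TDT (lam ω : ℝ) {m : ℕ} (t : Fin (m + 1) → ℝ) :
    Tm lam ω t * diagonal (dv lam ω t) * (Tm lam ω t)ᴴ = Km lam ω t := by
  ext i j
  rw [Matrix.mul_apply]
  simp only [Matrix.mul_diagonal, Matrix.conjTranspose_apply]
  have hterm : ∀ k : Fin (m + 1),
      Tm lam ω t i k * dv lam ω t k * star (Tm lam ω t j k)
        = (ec lam ω (t i) * (starRingEnd ℂ) (ec lam ω (t j))) *
            (if k ≤ i ⊓ j then dv lam ω t k * ((Complex.normSq (ec lam ω (t k)) : ℝ) : ℂ)⁻¹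
             else 0) := by
    intro k
    simp only [Tm, le_inf_iff]
    by_cases h1 : k ≤ i
    · by_cases h2 : k ≤ j
      · rw [if_pos h1, if_pos h2, if_pos ⟨h1, h2⟩]
        rw [Complex.star_def, _root_.map_mul, map_inv₀]
        have hk : (ec lam ω (t k))⁻¹ * ((starRingEnd ℂ) (ec lam ω (t k)))⁻¹
            = ((Complex.normSq (ec lam ω (t k)) : ℝ) : ℂ)⁻¹ := by
          rw [← mul_inv, Complex.mul_conj]
        rw [← hk]; ring
      · rw [if_pos h1, if_neg h2, if_neg (show ¬(k ≤ i ∧ k ≤ j) from fun h => h2 h.2)]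
        simp
    · rw [if_neg h1, if_neg (show ¬(k ≤ i ∧ k ≤ j) from fun h => h1 h.1)]
      simp
  rw [Finset.sum_congr rfl (fun k _ => hterm k), ← Finset.mul_sum, tel lam ω t (i ⊓ j)]
  by_cases h : j ≤ i
  · rw [Km, if_pos h, inf_eq_right.mpr h, mul_assoc,
      conj_mul_normSq_inv _ (ec_ne lam ω (t j))]
  · rw [Km, if_neg h]
    have hij : i ⊓ j = i := inf_eq_left.mpr (le_of_not_ge h)
    rw [hij, _root_.map_mul, map_inv₀,
      show ec lam ω (t i) * (starRingEnd ℂ) (ec lam ω (t j)) *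
          ((Complex.normSq (ec lam ω (t i)) : ℝ) : ℂ)⁻¹
        = (starRingEnd ℂ) (ec lam ω (t j)) *
          (ec lam ω (t i) * ((Complex.normSq (ec lam ω (t i)) : ℝ) : ℂ)⁻¹) from by ring,
      mul_normSq_inv _ (ec_ne lam ω (t i))]

lemma LTone (lam ω : ℝ) {m : ℕ} (t : Fin (m + 1) → ℝ) :
    Lm lam ω t * Tm lam ω t = 1 := by
  ext i j
  rw [Matrix.mul_apply, Matrix.one_apply]
  have hsplit : ∀ k : Fin (m + 1),
      Lm lam ω t i k * Tm lam ω t k j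
        = (if k = i then Tm lam ω t i j else 0)
          + (if (k : ℕ) + 1 = (i : ℕ)
              then -(ec lam ω (t i) * (ec lam ω (t k))⁻¹) * Tm lam ω t k j else 0) := by
    intro k
    by_cases hk : k = i
    · subst hk
      have h2 : ¬((k : ℕ) + 1 = (k : ℕ)) := by omega
      simp [Lm, h2]
    · simp only [Lm, if_neg hk, ite_mul, zero_mul, zero_add]
  rw [Finset.sum_congr rfl (fun k _ => hsplit k), Finset.sum_add_distrib,
    Finset.sum_ite_eq' Finset.univ i, if_pos (Finset.mem_univ _)]
  by_cases hi0 : (i : ℕ) = 0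
  · rw [Finset.sum_eq_zero (fun k _ => if_neg (by omega)), add_zero]
    have hi : i = 0 := Fin.ext hi0
    subst hi
    by_cases hj : j = (0 : Fin (m + 1))
    · subst hj
      simp [Tm, mul_inv_cancel₀ (ec_ne lam ω (t (0 : Fin (m + 1))))]
    · have h1 : ¬(j ≤ (0 : Fin (m + 1))) := by rw [Fin.le_zero_iff]; exact hj
      have h2 : ¬((0 : Fin (m + 1)) = j) := fun h => hj h.symm
      simp [Tm, h1, h2]
  · rw [Finset.sum_eq_single (pmf i),
      if_pos (show ((pmf i : Fin (m + 1)) : ℕ) + 1 = (i : ℕ) from by simp only [pmf]; omega)]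
    · rcases lt_trichotomy (j : ℕ) (i : ℕ) with hlt | heq | hgt
      · have hne : i ≠ j := fun h => by subst h; omega
        have hj1 : j ≤ i := by rw [Fin.le_def]; omega
        have hj2 : j ≤ pmf i := by rw [Fin.le_def]; simp only [pmf]; omega
        simp only [Tm, if_neg hne, if_pos hj1, if_pos hj2]
        field_simp
        ring_nf
        rw [mul_assoc (ec lam ω (t i)),
          mul_inv_cancel₀ (ec_ne lam ω (t (pmf i))), mul_one, neg_add_cancel]
      · have hij : i = j := Fin.ext heq.symm
        subst hij
        have h2 : ¬(i ≤ pmf i) := by rw [Fin.le_def]; simp only [pmf]; omega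
        simp [Tm, h2, mul_inv_cancel₀ (ec_ne lam ω (t i))]
      · have hne : i ≠ j := fun h => by subst h; omega
        have h1 : ¬(j ≤ i) := by rw [Fin.le_def]; omega
        have h2 : ¬(j ≤ pmf i) := by rw [Fin.le_def]; simp only [pmf]; omega
        simp [Tm, h1, h2, hne]
    · intro k _ hk
      exact if_neg (fun h => hk (Fin.ext (by simp only [pmf]; omega)))
    · intro h; exact absurd (Finset.mem_univ _) h

lemma normSq_ec_lt {lam ω : ℝ} (hlam : 0 < lam) {x y : ℝ} (hxy : x < y) :
    Complex.normSq (ec lam ω y) < Complex.normSq (ec lam ω x) := by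
  rw [normSq_ec, normSq_ec]
  apply Real.exp_lt_exp.mpr
  nlinarith

lemma dv_ne (lam ω : ℝ) {m : ℕ} (t : Fin (m + 1) → ℝ) (hlam : 0 < lam) (ht : StrictMono t)
    (i : Fin (m + 1)) : dv lam ω t i ≠ 0 := by
  rw [dv]
  by_cases hi : (i : ℕ) = 0
  · rw [if_pos hi]; exact one_ne_zero
  · rw [if_neg hi]
    rw [Complex.ofReal_ne_zero]
    have hpm : pmf i < i := by rw [Fin.lt_def]; simp only [pmf]; omega
    have hlt := normSq_ec_lt (ω := ω) hlam (ht hpm)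
    have hpos : (0 : ℝ) < Complex.normSq (ec lam ω (t (pmf i))) :=
      Complex.normSq_pos.mpr (ec_ne _ _ _)
    have : Complex.normSq (ec lam ω (t i)) / Complex.normSq (ec lam ω (t (pmf i))) < 1 :=
      (div_lt_one hpos).mpr hlt
    intro h
    rw [sub_eq_zero] at h
    exact absurd h.symm (ne_of_lt this)

noncomputable def Bm (lam ω : ℝ) {m : ℕ} (t : Fin (m + 1) → ℝ) :
    Matrix (Fin (m + 1)) (Fin (m + 1)) ℂ :=
  (Lm lam ω t)ᴴ * diagonal (fun i => (dv lam ω t i)⁻¹) * Lm lam ω t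

lemma K_mul_B (lam ω : ℝ) {m : ℕ} (t : Fin (m + 1) → ℝ) (hlam : 0 < lam)
    (ht : StrictMono t) : Km lam ω t * Bm lam ω t = 1 := by
  have hLT := LTone lam ω t
  have hTL : Tm lam ω t * Lm lam ω t = 1 := mul_eq_one_comm.mp hLT
  have hTLH : (Tm lam ω t)ᴴ * (Lm lam ω t)ᴴ = 1 := by
    rw [← conjTranspose_mul, hLT, conjTranspose_one]
  have hDD : diagonal (dv lam ω t) * diagonal (fun i => (dv lam ω t i)⁻¹) = 1 := by
    rw [diagonal_mul_diagonal]
    have : ∀ i, dv lam ω t i * (dv lam ω t i)⁻¹ = 1 :=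
      fun i => mul_inv_cancel₀ (dv_ne lam ω t hlam ht i)
    rw [show (fun i => dv lam ω t i * (dv lam ω t i)⁻¹) = fun _ => (1 : ℂ) from funext this]
    exact diagonal_one
  rw [← TDT lam ω t, Bm]
  calc Tm lam ω t * diagonal (dv lam ω t) * (Tm lam ω t)ᴴ *
        ((Lm lam ω t)ᴴ * diagonal (fun i => (dv lam ω t i)⁻¹) * Lm lam ω t)
      = Tm lam ω t * diagonal (dv lam ω t) * ((Tm lam ω t)ᴴ * (Lm lam ω t)ᴴ) *
        diagonal (fun i => (dv lam ω t i)⁻¹) * Lm lam ω t := by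
        simp only [Matrix.mul_assoc]
    _ = Tm lam ω t * (diagonal (dv lam ω t) * diagonal (fun i => (dv lam ω t i)⁻¹)) *
        Lm lam ω t := by rw [hTLH, Matrix.mul_one]; simp only [Matrix.mul_assoc]
    _ = 1 := by rw [hDD, Matrix.mul_one, hTL]

lemma rowSumL (lam ω : ℝ) {m : ℕ} (t : Fin (m + 1) → ℝ) (k : Fin (m + 1)) :
    ∑ j : Fin (m + 1), Lm lam ω t k j
      = if (k : ℕ) = 0 then 1 else 1 - ec lam ω (t k) * (ec lam ω (t (pmf k)))⁻¹ := by
  have hsplit : ∀ j : Fin (m + 1),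
      Lm lam ω t k j
        = (if j = k then 1 else 0)
          + (if (j : ℕ) + 1 = (k : ℕ)
              then -(ec lam ω (t k) * (ec lam ω (t j))⁻¹) else 0) := by
    intro j
    by_cases hj : j = k
    · subst hj
      have h2 : ¬((j : ℕ) + 1 = (j : ℕ)) := by omega
      simp [Lm, h2]
    · simp only [Lm, if_neg hj, zero_add]
  rw [Finset.sum_congr rfl (fun j _ => hsplit j), Finset.sum_add_distrib,
    Finset.sum_ite_eq' Finset.univ k, if_pos (Finset.mem_univ _)]
  by_cases hk : (k : ℕ) = 0
  · rw [Finset.sum_eq_zero (fun j _ => if_neg (by omega)), add_zero, if_pos hk]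
  · rw [Finset.sum_eq_single (pmf k), if_neg hk,
      if_pos (show ((pmf k : Fin (m + 1)) : ℕ) + 1 = (k : ℕ) from by simp only [pmf]; omega)]
    · ring
    · intro j _ hj
      exact if_neg (fun h => hj (Fin.ext (by simp only [pmf]; omega)))
    · intro h; exact absurd (Finset.mem_univ _) h

lemma gterm (lam ω δ : ℝ) :
    (starRingEnd ℂ) (1 - ec lam ω δ) *
        (((1 - Real.exp (-2 * lam * δ) : ℝ) : ℂ)⁻¹ * (1 - ec lam ω δ))
      = ((gfun lam ω δ : ℝ) : ℂ) := by
  have hc : (starRingEnd ℂ) (ec lam ω δ) * ec lam ω δ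
      = ((Complex.normSq (ec lam ω δ) : ℝ) : ℂ) := by
    rw [mul_comm, Complex.mul_conj]
  have hre : ec lam ω δ + (starRingEnd ℂ) (ec lam ω δ) = ((2 * (ec lam ω δ).re : ℝ) : ℂ) := by
    rw [Complex.add_conj]; try push_cast; try ring
  have h1 : (starRingEnd ℂ) (1 - ec lam ω δ) * (1 - ec lam ω δ)
      = ((1 - 2 * Real.exp (-lam * δ) * Real.cos (ω * δ) + Real.exp (-2 * lam * δ) : ℝ) : ℂ) := by
    have hexp : (starRingEnd ℂ) (1 - ec lam ω δ) * (1 - ec lam ω δ)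
        = 1 - (ec lam ω δ + (starRingEnd ℂ) (ec lam ω δ))
          + (starRingEnd ℂ) (ec lam ω δ) * ec lam ω δ := by
      rw [_root_.map_sub, _root_.map_one]; ring
    rw [hexp, hre, hc, normSq_ec, ec_re,
      show -(2 * lam) * δ = -2 * lam * δ from by ring]
    push_cast
    ring
  rw [show (starRingEnd ℂ) (1 - ec lam ω δ) *
        (((1 - Real.exp (-2 * lam * δ) : ℝ) : ℂ)⁻¹ * (1 - ec lam ω δ))
      = ((starRingEnd ℂ) (1 - ec lam ω δ) * (1 - ec lam ω δ)) *
        ((1 - Real.exp (-2 * lam * δ) : ℝ) : ℂ)⁻¹ from by ring, h1, gfun]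
  push_cast [div_eq_mul_inv]
  try ring

lemma sumB (lam ω : ℝ) {m : ℕ} (t : Fin (m + 1) → ℝ) :
    ∑ i : Fin (m + 1), ∑ j : Fin (m + 1), Bm lam ω t i j
      = ((1 + ∑ ℓ : Fin m, gfun lam ω (t ℓ.succ - t ℓ.castSucc) : ℝ) : ℂ) := by
  have hBij : ∀ i j : Fin (m + 1), Bm lam ω t i j
      = ∑ k : Fin (m + 1),
          (starRingEnd ℂ) (Lm lam ω t k i) * ((dv lam ω t k)⁻¹ * Lm lam ω t k j) := by
    intro i j
    rw [Bm, Matrix.mul_apply]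
    refine Finset.sum_congr rfl fun k _ => ?_
    simp only [Matrix.mul_diagonal, Matrix.conjTranspose_apply, Complex.star_def]
    ring
  have step1 : ∑ i : Fin (m + 1), ∑ j : Fin (m + 1), Bm lam ω t i j
      = ∑ k : Fin (m + 1),
          (∑ i : Fin (m + 1), (starRingEnd ℂ) (Lm lam ω t k i)) *
            ((dv lam ω t k)⁻¹ * ∑ j : Fin (m + 1), Lm lam ω t k j) := by
    simp only [hBij]
    rw [show ∑ i : Fin (m + 1), ∑ j : Fin (m + 1), ∑ k : Fin (m + 1),
          (starRingEnd ℂ) (Lm lam ω t k i) * ((dv lam ω t k)⁻¹ * Lm lam ω t k j)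
        = ∑ k : Fin (m + 1), ∑ i : Fin (m + 1), ∑ j : Fin (m + 1),
          (starRingEnd ℂ) (Lm lam ω t k i) * ((dv lam ω t k)⁻¹ * Lm lam ω t k j) from by
      rw [show ∑ i : Fin (m + 1), ∑ j : Fin (m + 1), ∑ k : Fin (m + 1),
            (starRingEnd ℂ) (Lm lam ω t k i) * ((dv lam ω t k)⁻¹ * Lm lam ω t k j)
          = ∑ i : Fin (m + 1), ∑ k : Fin (m + 1), ∑ j : Fin (m + 1),
            (starRingEnd ℂ) (Lm lam ω t k i) * ((dv lam ω t k)⁻¹ * Lm lam ω t k j) from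
        Finset.sum_congr rfl fun i _ => Finset.sum_comm]
      exact Finset.sum_comm]
    refine Finset.sum_congr rfl fun k _ => ?_
    rw [Finset.sum_mul]
    refine Finset.sum_congr rfl fun i _ => ?_
    rw [Finset.mul_sum, Finset.mul_sum]
    try exact Finset.sum_congr rfl fun j _ => by ring
  rw [step1]
  have hu : ∀ k : Fin (m + 1),
      (∑ i : Fin (m + 1), (starRingEnd ℂ) (Lm lam ω t k i))
        = (starRingEnd ℂ) (∑ i : Fin (m + 1), Lm lam ω t k i) := by
    intro k; rw [map_sum]
  simp only [hu, rowSumL]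
  rw [Fin.sum_univ_succ]
  have h00 : ((0 : Fin (m + 1)) : ℕ) = 0 := rfl
  rw [if_pos h00]
  have hdv0 : dv lam ω t 0 = 1 := by rw [dv, if_pos h00]
  rw [hdv0]
  simp only [_root_.map_one, inv_one, one_mul, mul_one]
  have hterm : ∀ k : Fin m,
      (starRingEnd ℂ) (if ((k.succ : Fin (m + 1)) : ℕ) = 0 then 1
          else 1 - ec lam ω (t k.succ) * (ec lam ω (t (pmf k.succ)))⁻¹) *
        ((dv lam ω t k.succ)⁻¹ *
          (if ((k.succ : Fin (m + 1)) : ℕ) = 0 then 1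
          else 1 - ec lam ω (t k.succ) * (ec lam ω (t (pmf k.succ)))⁻¹))
      = ((gfun lam ω (t k.succ - t k.castSucc) : ℝ) : ℂ) := by
    intro k
    have hk0 : ¬(((k.succ : Fin (m + 1)) : ℕ) = 0) := by simp
    have hpm : pmf (k.succ : Fin (m + 1)) = k.castSucc := by
      apply Fin.ext; simp [pmf]
    rw [if_neg hk0, hpm]
    have hec : ec lam ω (t k.succ) * (ec lam ω (t k.castSucc))⁻¹
        = ec lam ω (t k.succ - t k.castSucc) := by
      rw [ec_div']; rfl
    have hdv : dv lam ω t k.succ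
        = ((1 - Real.exp (-2 * lam * (t k.succ - t k.castSucc)) : ℝ) : ℂ) := by
      rw [dv, if_neg hk0, hpm, normSq_ec, normSq_ec, ← Real.exp_sub,
        show -(2 * lam) * t k.succ - -(2 * lam) * t k.castSucc
          = -2 * lam * (t k.succ - t k.castSucc) from by ring]
    rw [hec, hdv, gterm]
  rw [Finset.sum_congr rfl (fun k _ => hterm k)]
  push_cast
  try simp [_root_.map_one]
  try ring


noncomputable def blow {m : ℕ} (K : Matrix (Fin (m + 1)) (Fin (m + 1)) ℂ) :
    Matrix (Fin (m + 1) × Fin 2) (Fin (m + 1) × Fin 2) ℝ :=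
  fun p q => toR2 (K p.1 q.1) p.2 q.2

lemma blow_mul {m : ℕ} (K M : Matrix (Fin (m + 1)) (Fin (m + 1)) ℂ) :
    blow (K * M) = blow K * blow M := by
  ext ⟨i, a⟩ ⟨j, b⟩
  simp only [blow, Matrix.mul_apply, Fintype.sum_prod_type, map_sum, Matrix.sum_apply,
    _root_.map_mul]
  try exact Finset.sum_congr rfl fun k _ => by rw [Matrix.mul_apply]

lemma blow_one {m : ℕ} : blow (1 : Matrix (Fin (m + 1)) (Fin (m + 1)) ℂ) = 1 := by
  ext ⟨i, a⟩ ⟨j, b⟩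
  simp only [blow, Matrix.one_apply]
  by_cases hij : i = j
  · subst hij
    rw [if_pos rfl, _root_.map_one]
    by_cases hab : a = b
    · subst hab; simp [Prod.ext_iff]
    · rw [Matrix.one_apply_ne hab, if_neg (by simp [Prod.ext_iff, hab])]
  · rw [if_neg hij, map_zero, if_neg (by simp [Prod.ext_iff, hij])]
    simp

lemma Amat_eq (lam ω : ℝ) : Amat lam ω = toR2 (zc lam ω) := by
  ext a b
  fin_cases a <;> fin_cases b <;> simp [Amat, toR2, zc]

lemma AmatT_eq (lam ω : ℝ) : (Amat lam ω)ᵀ = toR2 ((starRingEnd ℂ) (zc lam ω)) := by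
  ext a b
  fin_cases a <;> fin_cases b <;> simp [Amat, toR2, zc]

lemma toR2_smul (s : ℝ) (z : ℂ) : s • toR2 z = toR2 ((s : ℂ) * z) := by
  ext a b
  fin_cases a <;> fin_cases b <;> simp [toR2] <;> ring

lemma exp_smul_Amat (lam ω s : ℝ) :
    NormedSpace.exp (s • Amat lam ω) = toR2 (Complex.exp (zc lam ω * s)) := by
  rw [Amat_eq, toR2_smul, toR2_exp, mul_comm]

lemma exp_smul_AmatT (lam ω s : ℝ) :
    NormedSpace.exp (s • (Amat lam ω)ᵀ)
      = toR2 ((starRingEnd ℂ) (Complex.exp (zc lam ω * s))) := by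
  rw [AmatT_eq, toR2_smul, toR2_exp, ← Complex.exp_conj]
  congr 2
  rw [_root_.map_mul, Complex.conj_ofReal, mul_comm]

lemma Cmat_eq (lam ω : ℝ) {m : ℕ} (t : Fin (m + 1) → ℝ) :
    Cmat lam ω t = blow (Km lam ω t) := by
  ext ⟨i, a⟩ ⟨j, b⟩
  simp only [Cmat, blow, Km]
  by_cases h : j ≤ i
  · rw [if_pos h, if_pos h, exp_smul_Amat, ec_div']
  · rw [if_neg h, if_neg h, exp_smul_AmatT, ec_div']


/-- For a complex OU process observed at design points `0 = t₁ < t₂ < ⋯ < tₙ = 1`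
with gaps `dᵢ = tᵢ₊₁ − tᵢ`, one has `H(n)·C(n)⁻¹·H(n)ᵀ = G(n)·I₂`, where
`G(n) = 1 + ∑_{ℓ=1}^{n−1} g(d_ℓ)` and
`g(x) = (1 − 2e^{−λx}cos(ωx) + e^{−2λx})/(1 − e^{−2λx})`. -/
theorem Hmat_Cinv_Hmat_transpose (lam ω : ℝ) (hlam : 0 < lam) (m : ℕ) (hm : 1 ≤ m)
    (t : Fin (m + 1) → ℝ) (ht : StrictMono t) (ht0 : t 0 = 0) (ht1 : t (Fin.last m) = 1) :
    Hmat m * (Cmat lam ω t)⁻¹ * (Hmat m)ᵀ =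
      (1 + ∑ ℓ : Fin m, gfun lam ω (t ℓ.succ - t ℓ.castSucc)) •
        (1 : Matrix (Fin 2) (Fin 2) ℝ) := by
  have hCinv : (Cmat lam ω t)⁻¹ = blow (Bm lam ω t) := by
    apply Matrix.inv_eq_right_inv
    rw [Cmat_eq, ← blow_mul, K_mul_B lam ω t hlam ht, blow_one]
  rw [hCinv]
  ext a b
  have hentry : (Hmat m * blow (Bm lam ω t) * (Hmat m)ᵀ) a b
      = ∑ i : Fin (m + 1), ∑ j : Fin (m + 1), toR2 (Bm lam ω t i j) a b := by
    rw [Matrix.mul_apply]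
    simp only [Matrix.mul_apply, Matrix.transpose_apply, Hmat, blow, Fintype.sum_prod_type]
    simp only [Matrix.one_apply, ite_mul, mul_ite, one_mul, mul_one, zero_mul, mul_zero,
      Finset.sum_ite_eq, Finset.sum_ite_eq', Finset.mem_univ, if_true]
    exact Finset.sum_comm
  rw [hentry,
    show ∑ i : Fin (m + 1), ∑ j : Fin (m + 1), toR2 (Bm lam ω t i j) a b
      = toR2 (∑ i : Fin (m + 1), ∑ j : Fin (m + 1), Bm lam ω t i j) a b from by
        simp [map_sum, Matrix.sum_apply],
    sumB lam ω t]
  fin_cases a <;> fin_cases b <;>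
    simp [toR2, Matrix.one_apply, Matrix.smul_apply]
end

section
/- Let λ > 0, ω ∈ ℝ, and design points 0 = t₁ < t₂ < ... < tₙ = 1. For every x ∈ [0, 1], tr[I₂ − (I₂, 𝒬(x)) · M⁻¹ · (I₂, 𝒬(x))ᵀ] = tr[I₂ − 𝒬(x)C(n)⁻¹𝒬(x)ᵀ + G(n)⁻¹(I₂ − 𝒬(x)C(n)⁻¹H(n)ᵀ)(I₂ − 𝒬(x)C(n)⁻¹H(n)ᵀ)ᵀ], where M is the bordered (2n+2)×(2n+2) block matrix [[O₂, H(n)], [H(n)ᵀ, C(n)]]. -/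
open Matrix

/-- The `2 × 2` correlation block
`Q(x,t) = e^{−λ|x−t|}·[[cos(ω(x−t)), sin(ω(x−t))], [−sin(ω(x−t)), cos(ω(x−t))]]`. -/
noncomputable def Qmat (lam ω x s : ℝ) : Matrix (Fin 2) (Fin 2) ℝ :=
  Real.exp (-lam * |x - s|) •
    !![Real.cos (ω * (x - s)), Real.sin (ω * (x - s));
       -Real.sin (ω * (x - s)), Real.cos (ω * (x - s))]

/-- The `2 × 2n` matrix `𝒬(x) = (Q(x,t₁), …, Q(x,tₙ))`. -/
noncomputable def Qcal (lam ω : ℝ) {m : ℕ} (t : Fin (m + 1) → ℝ) (x : ℝ) :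
    Matrix (Fin 2) (Fin (m + 1) × Fin 2) ℝ :=
  fun a p => Qmat lam ω x (t p.1) a p.2

/-- `G(n) = 1 + ∑_{ℓ=1}^{n−1} g(d_ℓ)`. -/
noncomputable def Gval (lam ω : ℝ) {m : ℕ} (t : Fin (m + 1) → ℝ) : ℝ :=
  1 + ∑ ℓ : Fin m, gfun lam ω (t ℓ.succ - t ℓ.castSucc)

namespace MSPE

/-- The embedding `ℂ →ₐ[ℝ] M₂(ℝ)`. -/
noncomputable def φJ : ℂ →ₐ[ℝ] Matrix (Fin 2) (Fin 2) ℝ :=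
  Complex.liftAux !![0, -1; 1, 0] (by
    ext i j
    fin_cases i <;> fin_cases j <;> simp [Matrix.mul_apply, Fin.sum_univ_two])

lemma φJ_apply (z : ℂ) : φJ z = !![z.re, -z.im; z.im, z.re] := by
  rw [φJ, Complex.liftAux_apply]
  ext i j
  fin_cases i <;> fin_cases j <;>
    simp [Matrix.algebraMap_eq_diagonal, Matrix.diagonal, Matrix.smul_apply]

lemma φJ_conj (z : ℂ) : φJ ((starRingEnd ℂ) z) = (φJ z)ᵀ := by
  rw [φJ_apply, φJ_apply]
  ext i j
  fin_cases i <;> fin_cases j <;> simp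

lemma φJ_ofReal (r : ℝ) : φJ (r : ℂ) = r • (1 : Matrix (Fin 2) (Fin 2) ℝ) := by
  rw [φJ_apply]
  ext i j
  fin_cases i <;> fin_cases j <;> simp

lemma φJ_continuous : Continuous φJ :=
  φJ.toLinearMap.continuous_of_finiteDimensional

lemma exp_eq_φJ (z : ℂ) :
    NormedSpace.exp (φJ z) = φJ (Complex.exp z) := by
  letI : SeminormedRing (Matrix (Fin 2) (Fin 2) ℝ) := Matrix.linftyOpSemiNormedRing
  letI : NormedRing (Matrix (Fin 2) (Fin 2) ℝ) := Matrix.linftyOpNormedRing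
  letI : NormedAlgebra ℝ (Matrix (Fin 2) (Fin 2) ℝ) := Matrix.linftyOpNormedAlgebra
  rw [Complex.exp_eq_exp_ℂ]
  exact (NormedSpace.map_exp φJ φJ_continuous z).symm

lemma smul_Amat (lam ω s : ℝ) :
    s • Amat lam ω = φJ ((-lam + ω * Complex.I) * s) := by
  rw [φJ_apply]
  ext i j
  fin_cases i <;> fin_cases j <;> simp [Amat] <;> ring

lemma exp_smul_Amat (lam ω s : ℝ) :
    NormedSpace.exp (s • Amat lam ω) = φJ (Complex.exp ((-lam + ω * Complex.I) * s)) := by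
  rw [smul_Amat, exp_eq_φJ]

lemma Amat_transpose (lam ω : ℝ) : (Amat lam ω)ᵀ = Amat lam (-ω) := by
  ext i j; fin_cases i <;> fin_cases j <;> simp [Amat]

lemma exp_smul_Amat_transpose (lam ω s : ℝ) :
    NormedSpace.exp (s • (Amat lam ω)ᵀ) =
      φJ ((starRingEnd ℂ) (Complex.exp ((-lam + ω * Complex.I) * s))) := by
  rw [Amat_transpose, exp_smul_Amat, ← Complex.exp_conj]
  congr 2
  simp [Complex.ext_iff]


variable (lam ω : ℝ)

noncomputable def efn (s : ℝ) : ℂ := Complex.exp ((-lam + ω * Complex.I) * s)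

lemma efn_zero : efn lam ω 0 = 1 := by simp [efn]

lemma efn_add (a b : ℝ) : efn lam ω (a + b) = efn lam ω a * efn lam ω b := by
  rw [efn, efn, efn, ← Complex.exp_add]
  push_cast
  ring_nf

lemma efn_mul_conj (s : ℝ) :
    efn lam ω s * (starRingEnd ℂ) (efn lam ω s) = (Real.exp (-2 * lam * s) : ℂ) := by
  rw [efn, ← Complex.exp_conj, ← Complex.exp_add, Complex.ofReal_exp]
  congr 1
  simp [Complex.ext_iff]
  ring

lemma efn_re (s : ℝ) : (efn lam ω s).re = Real.exp (-lam * s) * Real.cos (ω * s) := by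
  rw [efn, Complex.exp_re]
  congr 2 <;> simp

lemma one_sub_mul_conj_ne (hlam : 0 < lam) {s : ℝ} (hs : 0 < s) :
    1 - efn lam ω s * (starRingEnd ℂ) (efn lam ω s) ≠ 0 := by
  rw [efn_mul_conj]
  have h : Real.exp (-2 * lam * s) < 1 := by
    rw [Real.exp_lt_one_iff]
    nlinarith
  intro hc
  rw [sub_eq_zero] at hc
  have : (1 : ℝ) = Real.exp (-2 * lam * s) := by exact_mod_cast hc
  nlinarith

variable {m : ℕ} (t : Fin (m + 1) → ℝ)

/-- Complex covariance matrix. -/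
noncomputable def Chat : Matrix (Fin (m + 1)) (Fin (m + 1)) ℂ :=
  Matrix.of fun i j =>
    if j ≤ i then efn lam ω (t i - t j) else (starRingEnd ℂ) (efn lam ω (t j - t i))

lemma Chat_of_le {i j : Fin (m + 1)} (h : j ≤ i) :
    Chat lam ω t i j = efn lam ω (t i - t j) := if_pos h

lemma Chat_of_ge {i j : Fin (m + 1)} (h : i ≤ j) :
    Chat lam ω t i j = (starRingEnd ℂ) (efn lam ω (t j - t i)) := by
  rcases eq_or_lt_of_le h with rfl | hlt
  · rw [Chat_of_le lam ω t le_rfl]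
    simp [efn_zero]
  · exact if_neg (not_le.mpr hlt)

lemma Chat_herm (i j : Fin (m + 1)) :
    Chat lam ω t j i = (starRingEnd ℂ) (Chat lam ω t i j) := by
  rcases le_total j i with h | h
  · rw [Chat_of_le lam ω t h, Chat_of_ge lam ω t h]
  · rw [Chat_of_le lam ω t h, Chat_of_ge lam ω t h]
    exact (Complex.conj_conj _).symm

/-- successive gaps -/
noncomputable def dgap (k : Fin m) : ℝ := t k.succ - t k.castSucc

noncomputable def ρfn (k : Fin m) : ℂ := efn lam ω (dgap t k)

noncomputable def ufn (k : Fin m) : ℂ :=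
  (1 - ρfn lam ω t k) / (1 - ρfn lam ω t k * (starRingEnd ℂ) (ρfn lam ω t k))

lemma bracket (i : Fin (m + 1)) (k : Fin m) :
    Chat lam ω t i k.succ - Chat lam ω t i k.castSucc * (starRingEnd ℂ) (ρfn lam ω t k) =
      if (k : ℕ) < (i : ℕ) then
        efn lam ω (t i - t k.succ) *
          (1 - ρfn lam ω t k * (starRingEnd ℂ) (ρfn lam ω t k))
      else 0 := by
  split_ifs with h
  · have hsi : k.succ ≤ i := by
      rw [Fin.le_def, Fin.val_succ]
      omega
    have hci : k.castSucc ≤ i := by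
      rw [Fin.le_def, Fin.coe_castSucc]
      omega
    rw [Chat_of_le lam ω t hsi, Chat_of_le lam ω t hci]
    have hd : t i - t k.castSucc = (t i - t k.succ) + dgap t k := by
      rw [dgap]; ring
    rw [hd, efn_add, ρfn]
    ring
  · have h1 : i ≤ k.castSucc := by
      rw [Fin.le_def, Fin.coe_castSucc]
      omega
    have h2 : i ≤ k.succ := by
      rw [Fin.le_def, Fin.val_succ]
      omega
    rw [Chat_of_ge lam ω t h2, Chat_of_ge lam ω t h1]
    have hd : t k.succ - t i = dgap t k + (t k.castSucc - t i) := by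
      rw [dgap]; ring
    rw [hd, efn_add, RingHom.map_mul, ρfn]
    ring

/-- the candidate for `C⁻¹ * 1` -/
noncomputable def wvec : Fin (m + 1) → ℂ := fun j =>
  (Fin.cons (1 : ℂ) (ufn lam ω t) : Fin (m + 1) → ℂ) j -
    (Fin.snoc (fun k : Fin m => (starRingEnd ℂ) (ρfn lam ω t k) * ufn lam ω t k) (0 : ℂ) :
      Fin (m + 1) → ℂ) j

/-- telescoping helper sequence -/
noncomputable def fseq (i : Fin (m + 1)) : ℕ → ℂ := fun j =>
  efn lam ω (t i - t ⟨min j m, Nat.lt_succ_of_le (min_le_right _ _)⟩)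

lemma fseq_succ (i : Fin (m + 1)) (k : Fin m) :
    fseq lam ω t i ((k : ℕ) + 1) = efn lam ω (t i - t k.succ) := by
  rw [fseq]
  congr 2
  exact congrArg t (Fin.ext (by simp only [Fin.val_succ]; exact Nat.min_eq_left k.isLt))

lemma fseq_castSucc (i : Fin (m + 1)) (k : Fin m) :
    fseq lam ω t i (k : ℕ) = efn lam ω (t i - t k.castSucc) := by
  rw [fseq]
  congr 2
  exact congrArg t (Fin.ext
    (by simp only [Fin.coe_castSucc]; exact Nat.min_eq_left (le_of_lt k.isLt)))

lemma fseq_self (i : Fin (m + 1)) : fseq lam ω t i (i : ℕ) = 1 := by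
  rw [fseq]
  have he : (⟨min (i : ℕ) m, Nat.lt_succ_of_le (min_le_right _ _)⟩ : Fin (m + 1)) = i :=
    Fin.ext (Nat.min_eq_left (Nat.lt_succ_iff.mp i.isLt))
  rw [he]
  simp [efn_zero]

lemma fseq_zero (i : Fin (m + 1)) : fseq lam ω t i 0 = efn lam ω (t i - t 0) := by
  rw [fseq]
  congr 2

lemma sum_Chat_mul_wvec (hlam : 0 < lam) (ht : StrictMono t) (i : Fin (m + 1)) :
    ∑ j, Chat lam ω t i j * wvec lam ω t j = 1 := by
  have hdpos : ∀ k : Fin m, 0 < dgap t k := fun k => sub_pos.mpr (ht k.castSucc_lt_succ)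
  have hXne : ∀ k : Fin m,
      (1 - ρfn lam ω t k * (starRingEnd ℂ) (ρfn lam ω t k)) ≠ 0 := fun k =>
    one_sub_mul_conj_ne lam ω hlam (hdpos k)
  set f : ℕ → ℂ := fseq lam ω t i with hf
  have him : (i : ℕ) ≤ m := Nat.lt_succ_iff.mp i.isLt
  have hkey : ∀ k : Fin m,
      (Chat lam ω t i k.succ - Chat lam ω t i k.castSucc * (starRingEnd ℂ) (ρfn lam ω t k)) *
          ufn lam ω t k =
        if (k : ℕ) < (i : ℕ) then f ((k : ℕ) + 1) - f (k : ℕ) else 0 := by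
    intro k
    rw [bracket]
    split_ifs with h
    · rw [hf, fseq_succ, fseq_castSucc, ufn]
      have hd : t i - t k.castSucc = (t i - t k.succ) + dgap t k := by rw [dgap]; ring
      rw [hd, efn_add, ← ρfn]
      have hX := hXne k
      field_simp [hX]
    · exact zero_mul _
  have h1 : ∑ j, Chat lam ω t i j * (Fin.cons (1 : ℂ) (ufn lam ω t) : Fin (m + 1) → ℂ) j =
      Chat lam ω t i 0 + ∑ k : Fin m, Chat lam ω t i k.succ * ufn lam ω t k := by
    rw [Fin.sum_univ_succ]
    simp
  have h2 : ∑ j, Chat lam ω t i j *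
        (Fin.snoc (fun k : Fin m => (starRingEnd ℂ) (ρfn lam ω t k) * ufn lam ω t k) (0 : ℂ) :
          Fin (m + 1) → ℂ) j =
      ∑ k : Fin m, Chat lam ω t i k.castSucc *
        ((starRingEnd ℂ) (ρfn lam ω t k) * ufn lam ω t k) := by
    rw [Fin.sum_univ_castSucc]
    simp
  have h3 : ∑ j, Chat lam ω t i j * wvec lam ω t j =
      Chat lam ω t i 0 + ∑ k : Fin m,
        (Chat lam ω t i k.succ - Chat lam ω t i k.castSucc * (starRingEnd ℂ) (ρfn lam ω t k)) *
          ufn lam ω t k := by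
    simp only [wvec, mul_sub]
    rw [Finset.sum_sub_distrib, h1, h2, add_sub_assoc, ← Finset.sum_sub_distrib]
    congr 1
    refine Finset.sum_congr rfl fun k _ => ?_
    ring
  rw [h3]
  have h4 : ∑ k : Fin m,
      (Chat lam ω t i k.succ - Chat lam ω t i k.castSucc * (starRingEnd ℂ) (ρfn lam ω t k)) *
        ufn lam ω t k = f (i : ℕ) - f 0 := by
    simp_rw [hkey]
    rw [Fin.sum_univ_eq_sum_range (fun j => if j < (i : ℕ) then f (j + 1) - f j else 0) m]
    have hsub : ∑ j ∈ Finset.range m, (if j < (i : ℕ) then f (j + 1) - f j else 0) =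
        ∑ j ∈ Finset.range (i : ℕ), (if j < (i : ℕ) then f (j + 1) - f j else 0) := by
      refine (Finset.sum_subset (Finset.range_subset_range.mpr him) fun j _ hj => ?_).symm
      rw [if_neg (by simpa using hj)]
    rw [hsub, Finset.sum_congr rfl fun j hj => if_pos (Finset.mem_range.mp hj),
      Finset.sum_range_sub f (i : ℕ)]
  rw [h4, hf, fseq_self, fseq_zero, Chat_of_le lam ω t (Fin.zero_le i)]
  ring



lemma wterm (k : Fin m) :
    (1 - (starRingEnd ℂ) (ρfn lam ω t k)) * ufn lam ω t k =
      ((gfun lam ω (dgap t k) : ℝ) : ℂ) := by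
  have h1 : ρfn lam ω t k * (starRingEnd ℂ) (ρfn lam ω t k) =
      ((Real.exp (-2 * lam * dgap t k) : ℝ) : ℂ) := efn_mul_conj lam ω _
  have h2 : ρfn lam ω t k + (starRingEnd ℂ) (ρfn lam ω t k) =
      ((2 * (Real.exp (-lam * dgap t k) * Real.cos (ω * dgap t k)) : ℝ) : ℂ) := by
    rw [ρfn, Complex.add_conj, efn_re]
  rw [ufn, mul_div_assoc']
  have hnum : (1 - (starRingEnd ℂ) (ρfn lam ω t k)) * (1 - ρfn lam ω t k) =
      1 - (ρfn lam ω t k + (starRingEnd ℂ) (ρfn lam ω t k)) +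
        ρfn lam ω t k * (starRingEnd ℂ) (ρfn lam ω t k) := by ring
  rw [hnum, h2, h1, gfun]
  push_cast
  ring

lemma sum_wvec :
    ∑ j, wvec lam ω t j = ((1 + ∑ k : Fin m, gfun lam ω (dgap t k) : ℝ) : ℂ) := by
  rw [show (∑ j, wvec lam ω t j) = ∑ j, ((Fin.cons (1 : ℂ) (ufn lam ω t) : Fin (m+1) → ℂ) j) -
      ∑ j, ((Fin.snoc (fun k : Fin m => (starRingEnd ℂ) (ρfn lam ω t k) * ufn lam ω t k)
        (0 : ℂ) : Fin (m+1) → ℂ) j) from by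
    rw [← Finset.sum_sub_distrib]; rfl]
  rw [Fin.sum_univ_succ, Fin.sum_univ_castSucc]
  simp only [Fin.cons_zero, Fin.cons_succ, Fin.snoc_castSucc, Fin.snoc_last, add_zero]
  push_cast
  rw [add_sub_assoc, ← Finset.sum_sub_distrib]
  congr 1
  rw [← Finset.sum_congr rfl fun k _ => (wterm lam ω t k)]
  refine Finset.sum_congr rfl fun k _ => ?_
  ring

/-- upper bidiagonal triangularizer -/
noncomputable def Bs : Matrix (Fin (m + 1)) (Fin (m + 1)) ℂ :=
  1 - Matrix.of fun (j k : Fin (m + 1)) =>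
    if (j : ℕ) + 1 = (k : ℕ) then (starRingEnd ℂ) (efn lam ω (t k - t j)) else 0

lemma ChatBs_apply (i j : Fin (m + 1)) :
    (Chat lam ω t * Bs lam ω t) i j =
      Chat lam ω t i j - ∑ k, Chat lam ω t i k *
        (if (k : ℕ) + 1 = (j : ℕ) then (starRingEnd ℂ) (efn lam ω (t j - t k)) else 0) := by
  rw [Matrix.mul_apply]
  simp only [Bs, Matrix.sub_apply, Matrix.one_apply, Matrix.of_apply, mul_sub]
  rw [Finset.sum_sub_distrib]
  congr 1
  rw [Finset.sum_eq_single j]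
  · simp
  · intro k _ hk
    simp [hk]
  · intro h
    exact absurd (Finset.mem_univ j) h

lemma ChatBs_zero (i : Fin (m + 1)) :
    (Chat lam ω t * Bs lam ω t) i 0 = Chat lam ω t i 0 := by
  rw [ChatBs_apply]
  simp

lemma ChatBs_succ (i : Fin (m + 1)) (l : Fin m) :
    (Chat lam ω t * Bs lam ω t) i l.succ =
      if (l : ℕ) < (i : ℕ) then
        efn lam ω (t i - t l.succ) *
          (1 - ρfn lam ω t l * (starRingEnd ℂ) (ρfn lam ω t l))
      else 0 := by
  rw [ChatBs_apply]
  have hsum : ∑ k, Chat lam ω t i k *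
      (if (k : ℕ) + 1 = ((l.succ : Fin (m+1)) : ℕ) then
        (starRingEnd ℂ) (efn lam ω (t l.succ - t k)) else 0) =
      Chat lam ω t i l.castSucc * (starRingEnd ℂ) (ρfn lam ω t l) := by
    rw [Finset.sum_eq_single l.castSucc]
    · rw [if_pos (by simp), ρfn, dgap]
    · intro k _ hk
      rw [if_neg, mul_zero]
      intro hc
      apply hk
      apply Fin.ext
      simp only [Fin.val_succ] at hc
      simp only [Fin.coe_castSucc]
      omega
    · intro h
      exact absurd (Finset.mem_univ _) h
  rw [hsum, bracket]

lemma ChatBs_lowerTriangular :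
    Matrix.BlockTriangular (Chat lam ω t * Bs lam ω t) OrderDual.toDual := by
  intro i j hij
  have hij' : i < j := hij
  induction j using Fin.cases with
  | zero => exact absurd hij' (Fin.not_lt_zero _)
  | succ l =>
    rw [ChatBs_succ, if_neg]
    have h2 : (i : ℕ) < (l : ℕ) + 1 := by
      have h3 := hij'
      simp only [Fin.lt_def, Fin.val_succ] at h3
      omega
    omega

lemma det_Chat_ne_zero (hlam : 0 < lam) (ht : StrictMono t) :
    (Chat lam ω t).det ≠ 0 := by
  have hdpos : ∀ k : Fin m, 0 < dgap t k := fun k => sub_pos.mpr (ht k.castSucc_lt_succ)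
  have hdet : (Chat lam ω t * Bs lam ω t).det = ∏ i, (Chat lam ω t * Bs lam ω t) i i :=
    Matrix.det_of_lowerTriangular _ (ChatBs_lowerTriangular lam ω t)
  have hne : (Chat lam ω t * Bs lam ω t).det ≠ 0 := by
    rw [hdet]
    refine Finset.prod_ne_zero_iff.mpr fun i _ => ?_
    induction i using Fin.cases with
    | zero =>
      rw [ChatBs_zero, Chat_of_le lam ω t le_rfl, sub_self, efn_zero]
      exact one_ne_zero
    | succ l =>
      rw [ChatBs_succ, if_pos (by simp), sub_self, efn_zero, one_mul]
      exact one_sub_mul_conj_ne lam ω hlam (hdpos l)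
  rw [Matrix.det_mul] at hne
  exact left_ne_zero_of_mul hne


/-- Entrywise realification of a complex `n × n` matrix into a `2n × 2n` real matrix. -/
noncomputable def Φ {m : ℕ} (X : Matrix (Fin (m + 1)) (Fin (m + 1)) ℂ) :
    Matrix (Fin (m + 1) × Fin 2) (Fin (m + 1) × Fin 2) ℝ :=
  fun p q => φJ (X p.1 q.1) p.2 q.2

lemma Φ_one {m : ℕ} : (Φ (1 : Matrix (Fin (m + 1)) (Fin (m + 1)) ℂ)) = 1 := by
  ext p q
  by_cases h : p.1 = q.1
  · simp [Φ, Matrix.one_apply, h, Prod.ext_iff]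
  · simp [Φ, Matrix.one_apply, h, Prod.ext_iff]

lemma Φ_mul {m : ℕ} (X Y : Matrix (Fin (m + 1)) (Fin (m + 1)) ℂ) :
    Φ (X * Y) = Φ X * Φ Y := by
  ext p q
  rw [Matrix.mul_apply, Fintype.sum_prod_type]
  have h1 : ∀ r : Fin (m + 1), ∑ c : Fin 2, Φ X p (r, c) * Φ Y (r, c) q =
      φJ (X p.1 r * Y r q.1) p.2 q.2 := by
    intro r
    rw [_root_.map_mul, Matrix.mul_apply]
    rfl
  rw [Finset.sum_congr rfl fun r _ => h1 r]
  show Φ (X * Y) p q = _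
  rw [Φ, Matrix.mul_apply, map_sum φJ, Matrix.sum_apply]

lemma Cmat_eq_Φ : Cmat lam ω t = Φ (Chat lam ω t) := by
  ext p q
  show (if q.1 ≤ p.1 then NormedSpace.exp ((t p.1 - t q.1) • Amat lam ω)
      else NormedSpace.exp ((t q.1 - t p.1) • (Amat lam ω)ᵀ)) p.2 q.2 =
    φJ (Chat lam ω t p.1 q.1) p.2 q.2
  rw [Chat, Matrix.of_apply]
  split_ifs with h
  · rw [exp_smul_Amat, efn]
  · rw [exp_smul_Amat_transpose, efn]

/-- The candidate for `C⁻¹ * Hᵀ`. -/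
noncomputable def Wmat : Matrix (Fin (m + 1) × Fin 2) (Fin 2) ℝ :=
  fun p b => φJ (wvec lam ω t p.1) p.2 b

lemma Cmat_mul_Wmat (hlam : 0 < lam) (ht : StrictMono t) :
    Cmat lam ω t * Wmat lam ω t = (Hmat m)ᵀ := by
  ext p b
  rw [MSPE.Cmat_eq_Φ, Matrix.mul_apply, Fintype.sum_prod_type]
  have h1 : ∀ r : Fin (m + 1), ∑ c : Fin 2, Φ (Chat lam ω t) p (r, c) * Wmat lam ω t (r, c) b =
      φJ (Chat lam ω t p.1 r * wvec lam ω t r) p.2 b := by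
    intro r
    rw [_root_.map_mul, Matrix.mul_apply]
    rfl
  rw [Finset.sum_congr rfl fun r _ => h1 r, ← Matrix.sum_apply, ← map_sum φJ,
    sum_Chat_mul_wvec lam ω t hlam ht p.1, _root_.map_one]
  show (1 : Matrix (Fin 2) (Fin 2) ℝ) p.2 b = (1 : Matrix (Fin 2) (Fin 2) ℝ) b p.2
  rw [Matrix.one_apply, Matrix.one_apply]
  simp [eq_comm]

lemma Hmat_mul_Wmat :
    Hmat m * Wmat lam ω t = Gval lam ω t • (1 : Matrix (Fin 2) (Fin 2) ℝ) := by
  ext a b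
  rw [Matrix.mul_apply, Fintype.sum_prod_type]
  have h1 : ∀ r : Fin (m + 1), ∑ c : Fin 2, Hmat m a (r, c) * Wmat lam ω t (r, c) b =
      φJ (wvec lam ω t r) a b := by
    intro r
    have h2 : ∀ c : Fin 2, Hmat m a (r, c) * Wmat lam ω t (r, c) b =
        (1 : Matrix (Fin 2) (Fin 2) ℝ) a c * φJ (wvec lam ω t r) c b := fun c => rfl
    rw [Finset.sum_congr rfl fun c _ => h2 c, ← Matrix.mul_apply, Matrix.one_mul]
  rw [Finset.sum_congr rfl fun r _ => h1 r, ← Matrix.sum_apply, ← map_sum φJ,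
    sum_wvec lam ω t, φJ_ofReal]
  show (Gval lam ω t • (1 : Matrix (Fin 2) (Fin 2) ℝ)) a b = _
  rw [Gval]

lemma Cmat_symm : (Cmat lam ω t)ᵀ = Cmat lam ω t := by
  rw [Cmat_eq_Φ]
  ext p q
  show φJ (Chat lam ω t q.1 p.1) q.2 p.2 = φJ (Chat lam ω t p.1 q.1) p.2 q.2
  rw [Chat_herm lam ω t p.1 q.1, φJ_conj]
  rfl

lemma gfun_nonneg (hlam : 0 < lam) {x : ℝ} (hx : 0 < x) : 0 ≤ gfun lam ω x := by
  have ha : 0 < Real.exp (-lam * x) := Real.exp_pos _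
  have ha1 : Real.exp (-lam * x) < 1 := by
    rw [Real.exp_lt_one_iff]
    nlinarith
  have hsq : Real.exp (-2 * lam * x) = Real.exp (-lam * x) * Real.exp (-lam * x) := by
    rw [← Real.exp_add]
    ring_nf
  have hc : Real.cos (ω * x) ≤ 1 := Real.cos_le_one _
  rw [gfun]
  apply div_nonneg
  · nlinarith [sq_nonneg (1 - Real.exp (-lam * x))]
  · nlinarith

lemma Gval_pos (hlam : 0 < lam) (ht : StrictMono t) : 0 < Gval lam ω t := by
  rw [Gval]
  have h : 0 ≤ ∑ ℓ : Fin m, gfun lam ω (t ℓ.succ - t ℓ.castSucc) :=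
    Finset.sum_nonneg fun ℓ _ =>
      gfun_nonneg lam ω hlam (sub_pos.mpr (ht ℓ.castSucc_lt_succ))
  linarith

end MSPE

/-- For every `x ∈ [0,1]`, the trace appearing in the MSPE of the BLUP of the
complex OU process satisfies
`tr[I₂ − (I₂, 𝒬(x))·M⁻¹·(I₂, 𝒬(x))ᵀ] = tr[I₂ − 𝒬C⁻¹𝒬ᵀ + G⁻¹(I₂ − 𝒬C⁻¹Hᵀ)(I₂ − 𝒬C⁻¹Hᵀ)ᵀ]`,
where `M = [[O₂, H(n)], [H(n)ᵀ, C(n)]]`. -/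
theorem mspe_trace_identity (lam ω : ℝ) (hlam : 0 < lam) (m : ℕ) (hm : 1 ≤ m)
    (t : Fin (m + 1) → ℝ) (ht : StrictMono t) (ht0 : t 0 = 0) (ht1 : t (Fin.last m) = 1)
    (x : ℝ) (hx : x ∈ Set.Icc (0 : ℝ) 1) :
    ((1 : Matrix (Fin 2) (Fin 2) ℝ) -
        Matrix.fromCols (1 : Matrix (Fin 2) (Fin 2) ℝ) (Qcal lam ω t x) *
          (Matrix.fromBlocks (0 : Matrix (Fin 2) (Fin 2) ℝ) (Hmat m) (Hmat m)ᵀ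
            (Cmat lam ω t))⁻¹ *
          (Matrix.fromCols (1 : Matrix (Fin 2) (Fin 2) ℝ) (Qcal lam ω t x))ᵀ).trace =
      ((1 : Matrix (Fin 2) (Fin 2) ℝ) -
          Qcal lam ω t x * (Cmat lam ω t)⁻¹ * (Qcal lam ω t x)ᵀ +
          (Gval lam ω t)⁻¹ •
            (((1 : Matrix (Fin 2) (Fin 2) ℝ) -
                Qcal lam ω t x * (Cmat lam ω t)⁻¹ * (Hmat m)ᵀ) *
              ((1 : Matrix (Fin 2) (Fin 2) ℝ) -
                Qcal lam ω t x * (Cmat lam ω t)⁻¹ * (Hmat m)ᵀ)ᵀ)).trace := by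
  classical
  have hunit : IsUnit (MSPE.Chat lam ω t).det :=
    isUnit_iff_ne_zero.mpr (MSPE.det_Chat_ne_zero lam ω t hlam ht)
  have hCright : Cmat lam ω t * MSPE.Φ (MSPE.Chat lam ω t)⁻¹ = 1 := by
    rw [MSPE.Cmat_eq_Φ, ← MSPE.Φ_mul, Matrix.mul_nonsing_inv _ hunit, MSPE.Φ_one]
  letI iC : Invertible (Cmat lam ω t) := invertibleOfRightInverse _ _ hCright
  have hCdet : IsUnit (Cmat lam ω t).det := Matrix.isUnit_det_of_invertible _
  have hW : (Cmat lam ω t)⁻¹ * (Hmat m)ᵀ = MSPE.Wmat lam ω t := by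
    rw [← MSPE.Cmat_mul_Wmat lam ω t hlam ht, ← Matrix.mul_assoc,
      Matrix.nonsing_inv_mul _ hCdet, Matrix.one_mul]
  have hHCH : Hmat m * (Cmat lam ω t)⁻¹ * (Hmat m)ᵀ =
      Gval lam ω t • (1 : Matrix (Fin 2) (Fin 2) ℝ) := by
    rw [Matrix.mul_assoc, hW, MSPE.Hmat_mul_Wmat]
  have hgpos : 0 < Gval lam ω t := MSPE.Gval_pos lam ω t hlam ht
  have hg : Gval lam ω t ≠ 0 := ne_of_gt hgpos
  have hSchur_eq : (0 : Matrix (Fin 2) (Fin 2) ℝ) -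
      Hmat m * ⅟(Cmat lam ω t) * (Hmat m)ᵀ =
      (-(Gval lam ω t)) • (1 : Matrix (Fin 2) (Fin 2) ℝ) := by
    rw [Matrix.invOf_eq_nonsing_inv, hHCH, zero_sub, ← neg_smul]
  letI iS0 : Invertible ((-(Gval lam ω t)) • (1 : Matrix (Fin 2) (Fin 2) ℝ)) :=
    ⟨(-(Gval lam ω t))⁻¹ • 1, by
      rw [Matrix.smul_mul, Matrix.mul_smul, Matrix.one_mul, smul_smul,
        inv_mul_cancel₀ (neg_ne_zero.mpr hg), one_smul], by
      rw [Matrix.smul_mul, Matrix.mul_smul, Matrix.one_mul, smul_smul,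
        mul_inv_cancel₀ (neg_ne_zero.mpr hg), one_smul]⟩
  letI iS : Invertible ((0 : Matrix (Fin 2) (Fin 2) ℝ) -
      Hmat m * ⅟(Cmat lam ω t) * (Hmat m)ᵀ) := iS0.copy _ hSchur_eq
  letI iM : Invertible (Matrix.fromBlocks (0 : Matrix (Fin 2) (Fin 2) ℝ) (Hmat m)
      (Hmat m)ᵀ (Cmat lam ω t)) := Matrix.fromBlocks₂₂Invertible _ _ _ _
  have hSinv : ⅟((0 : Matrix (Fin 2) (Fin 2) ℝ) -
      Hmat m * ⅟(Cmat lam ω t) * (Hmat m)ᵀ) =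
      -((Gval lam ω t)⁻¹ • (1 : Matrix (Fin 2) (Fin 2) ℝ)) := by
    apply invOf_eq_right_inv
    rw [hSchur_eq, Matrix.mul_neg, Matrix.smul_mul, Matrix.mul_smul, Matrix.one_mul,
      smul_smul, neg_mul, mul_inv_cancel₀ hg, neg_smul, neg_neg, one_smul]
  have hMinv : (Matrix.fromBlocks (0 : Matrix (Fin 2) (Fin 2) ℝ) (Hmat m)
      (Hmat m)ᵀ (Cmat lam ω t))⁻¹ = ⅟(Matrix.fromBlocks (0 : Matrix (Fin 2) (Fin 2) ℝ)
      (Hmat m) (Hmat m)ᵀ (Cmat lam ω t)) := (Matrix.invOf_eq_nonsing_inv _).symm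
  have hKT : ((Cmat lam ω t)⁻¹)ᵀ = (Cmat lam ω t)⁻¹ := by
    rw [Matrix.transpose_nonsing_inv, MSPE.Cmat_symm]
  congr 1
  rw [hMinv, Matrix.invOf_fromBlocks₂₂_eq, hSinv, Matrix.invOf_eq_nonsing_inv (Cmat lam ω t)]
  rw [Matrix.transpose_fromCols, Matrix.transpose_one, Matrix.fromCols_mul_fromBlocks,
    Matrix.fromCols_mul_fromRows]
  set Q := Qcal lam ω t x
  set K := (Cmat lam ω t)⁻¹
  set H := Hmat m
  set g := Gval lam ω t
  simp only [Matrix.transpose_sub, Matrix.transpose_mul, Matrix.transpose_one,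
    Matrix.transpose_transpose, hKT]
  simp only [Matrix.mul_neg, Matrix.neg_mul, Matrix.mul_add, Matrix.add_mul,
    Matrix.mul_sub, Matrix.sub_mul, Matrix.mul_smul, Matrix.smul_mul,
    Matrix.one_mul, Matrix.mul_one, Matrix.mul_assoc, smul_sub, smul_add, neg_neg]
  abel
end
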